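/- arXiv:2602.00975 — 5 statements merged into one kernel-verified Lean document; each statement's English description precedes it below -/
import Mathlib

section
/- Let N ≥ 2, let H be an N×N real symmetric matrix, let z ∈ ℂ with Im z > 0, and fix k ∈ {1,…,N}. Let G(z) = (H − z·I)⁻¹, let H^{(k)} be the (N−1)×(N−1) matrix obtained from H by deleting row k and column k, and let G^{(k)}(z) = (H^{(k)} − z·I)⁻¹. Then G_{kk}(z) ≠ 0, and for all i, j ∈ {1,…,N} with i ≠ k and j ≠ k one has G^{(k)}_{ij}(z) = G_{ij}(z) − G_{ik}(z)·G_{kj}(z)/G_{kk}(z). -/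
open Matrix Finset

/-- A real symmetric matrix shifted by a non-real `z` has invertible determinant. -/
lemma herm_det_isUnit {n : Type*} [Fintype n] [DecidableEq n]
    (H : Matrix n n ℝ) (hH : H.IsSymm) (z : ℂ) (hz : z.im ≠ 0) :
    IsUnit (H.map Complex.ofReal - z • 1).det := by
  rw [isUnit_iff_ne_zero]
  intro hdet
  obtain ⟨v, hv, hAv⟩ := (Matrix.exists_mulVec_eq_zero_iff).2 hdet
  have hHv : (H.map Complex.ofReal).mulVec v = z • v := by
    have h := hAv
    rw [Matrix.sub_mulVec, sub_eq_zero] at h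
    rw [h, Matrix.smul_mulVec, Matrix.one_mulVec]
  set s : ℂ := ∑ i, (starRingEnd ℂ) (v i) * ((H.map Complex.ofReal).mulVec v) i with hs
  set r : ℝ := ∑ i, Complex.normSq (v i) with hr
  have hs2 : s = z * (r : ℂ) := by
    rw [hs]
    simp only [hHv, Pi.smul_apply, smul_eq_mul, hr]
    push_cast
    rw [Finset.mul_sum]
    refine Finset.sum_congr rfl fun i _ => ?_
    rw [Complex.normSq_eq_conj_mul_self]
    ring
  have h1 : s = ∑ a, ∑ b, (H a b : ℂ) * ((starRingEnd ℂ) (v a) * v b) := by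
    rw [hs]
    refine Finset.sum_congr rfl fun a _ => ?_
    simp only [Matrix.mulVec, dotProduct, Matrix.map_apply, Finset.mul_sum]
    exact Finset.sum_congr rfl fun b _ => by ring
  have hreal : (starRingEnd ℂ) s = s := by
    calc (starRingEnd ℂ) s = ∑ a, ∑ b, (H a b : ℂ) * v a * (starRingEnd ℂ) (v b) := by
          rw [h1, map_sum]
          refine Finset.sum_congr rfl fun a _ => ?_
          rw [map_sum]
          refine Finset.sum_congr rfl fun b _ => ?_
          rw [_root_.map_mul, _root_.map_mul, Complex.conj_ofReal, Complex.conj_conj]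
          ring
      _ = ∑ b, ∑ a, (H a b : ℂ) * v a * (starRingEnd ℂ) (v b) := Finset.sum_comm
      _ = s := by
          rw [h1]
          refine Finset.sum_congr rfl fun a _ => Finset.sum_congr rfl fun b _ => ?_
          rw [hH.apply a b]
          ring
  have him : s.im = 0 := by
    have := congrArg Complex.im hreal
    simp only [Complex.conj_im] at this
    linarith
  have hr0 : r = 0 := by
    rw [hs2] at him
    simp only [Complex.mul_im, Complex.ofReal_re, Complex.ofReal_im, mul_zero, add_zero,
      zero_add] at him
    rcases mul_eq_zero.1 him with h | h
    · exact absurd h hz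
    · exact h
  have : ∀ i ∈ Finset.univ, Complex.normSq (v i) = 0 := by
    rw [Finset.sum_eq_zero_iff_of_nonneg (fun i _ => Complex.normSq_nonneg _)] at hr0
    exact hr0
  apply hv
  funext i
  exact Complex.normSq_eq_zero.1 (this i (Finset.mem_univ i))

lemma sum_ne_k {N : ℕ} (k : Fin N) (f : Fin N → ℂ) :
    ∑ l : {x : Fin N // x ≠ k}, f l.val = ∑ l, f l - f k := by
  rw [← Finset.sum_subtype (Finset.univ.erase k)
    (fun x => by simp [Finset.mem_erase]) f]
  have := Finset.add_sum_erase Finset.univ f (Finset.mem_univ k)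
  linear_combination this

/-- **Schur complement formula for a one-vertex minor.** For an `N × N` real symmetric matrix
`H` (`N ≥ 2`), `z ∈ ℂ` with `Im z > 0`, and an index `k`, let `G(z) = (H - z·I)⁻¹` and let
`G^{(k)}(z) = (H^{(k)} - z·I)⁻¹` be the Green's function of the minor obtained by deleting row
and column `k`. Then `G_{kk}(z) ≠ 0` and, for all `i ≠ k`, `j ≠ k`,
`G^{(k)}_{ij}(z) = G_{ij}(z) - G_{ik}(z) G_{kj}(z) / G_{kk}(z)`. -/
theorem schur_minor (N : ℕ) (hN : 2 ≤ N) (H : Matrix (Fin N) (Fin N) ℝ) (hH : H.IsSymm)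
    (z : ℂ) (hz : 0 < z.im) (k : Fin N)
    (G : Matrix (Fin N) (Fin N) ℂ)
    (hG : G = (H.map Complex.ofReal - z • 1)⁻¹)
    (Gk : Matrix {x : Fin N // x ≠ k} {x : Fin N // x ≠ k} ℂ)
    (hGk : Gk = ((H.submatrix (Subtype.val : {x : Fin N // x ≠ k} → Fin N)
        (Subtype.val : {x : Fin N // x ≠ k} → Fin N)).map Complex.ofReal - z • 1)⁻¹) :
    G k k ≠ 0 ∧
    ∀ (i j : Fin N) (hi : i ≠ k) (hj : j ≠ k),
      Gk ⟨i, hi⟩ ⟨j, hj⟩ = G i j - G i k * G k j / G k k := by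
  set A : Matrix (Fin N) (Fin N) ℂ := H.map Complex.ofReal - z • 1 with hA
  have hAdet := herm_det_isUnit H hH z (ne_of_gt hz)
  have hAG : A * G = 1 := by rw [hG]; exact Matrix.mul_nonsing_inv A hAdet
  have hGA : G * A = 1 := by rw [hG]; exact Matrix.nonsing_inv_mul A hAdet
  have hAGe : ∀ i j, ∑ l, A i l * G l j = if i = j then 1 else 0 := by
    intro i j
    have := congrFun (congrFun hAG i) j
    rwa [Matrix.mul_apply, Matrix.one_apply] at this
  have hGAe : ∀ i j, ∑ l, G i l * A l j = if i = j then 1 else 0 := by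
    intro i j
    have := congrFun (congrFun hGA i) j
    rwa [Matrix.mul_apply, Matrix.one_apply] at this
  set B : Matrix {x : Fin N // x ≠ k} {x : Fin N // x ≠ k} ℂ :=
    (H.submatrix (Subtype.val : {x : Fin N // x ≠ k} → Fin N)
        (Subtype.val : {x : Fin N // x ≠ k} → Fin N)).map Complex.ofReal - z • 1 with hB
  have hHsub : (H.submatrix (Subtype.val : {x : Fin N // x ≠ k} → Fin N)
      (Subtype.val : {x : Fin N // x ≠ k} → Fin N)).IsSymm := by
    ext i j
    simp only [Matrix.transpose_apply, Matrix.submatrix_apply]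
    exact hH.apply _ _
  have hBdet := herm_det_isUnit _ hHsub z (ne_of_gt hz)
  have hBA : ∀ (l j : {x : Fin N // x ≠ k}), B l j = A l.val j.val := by
    intro l j
    simp [hB, hA, Matrix.one_apply, Matrix.smul_apply, Subtype.ext_iff]
  have hGkk : G k k ≠ 0 := by
    intro h0
    set w : {x : Fin N // x ≠ k} → ℂ := fun l => G k l.val with hw
    have hwB : Matrix.vecMul w B = 0 := by
      funext j
      simp only [Matrix.vecMul, dotProduct, hw]
      have : ∀ l : {x : Fin N // x ≠ k}, G k l.val * B l j = G k l.val * A l.val j.val := by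
        intro l; rw [hBA]
      rw [Finset.sum_congr rfl fun l _ => this l]
      rw [sum_ne_k k (fun l => G k l * A l j.val)]
      rw [hGAe k j.val, if_neg (fun h => j.2 h.symm), h0]
      simp
    have hw0 : w = 0 := by
      have h1 := congrArg (fun u => Matrix.vecMul u B⁻¹) hwB
      simpa [Matrix.vecMul_vecMul, Matrix.mul_nonsing_inv B hBdet] using h1
    have hrow : ∀ l, G k l = 0 := by
      intro l
      by_cases hl : l = k
      · rw [hl]; exact h0
      · exact congrFun hw0 ⟨l, hl⟩
    have := hGAe k k
    rw [if_pos rfl] at this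
    rw [Finset.sum_eq_zero (fun l _ => by rw [hrow l, zero_mul])] at this
    exact one_ne_zero this.symm
  refine ⟨hGkk, ?_⟩
  set Mm : Matrix {x : Fin N // x ≠ k} {x : Fin N // x ≠ k} ℂ :=
    fun l j => G l.val j.val - G l.val k * G k j.val / G k k with hMm
  have hBM : B * Mm = 1 := by
    ext i j
    rw [Matrix.mul_apply, Matrix.one_apply]
    have e1 : ∀ l : {x : Fin N // x ≠ k}, B i l * Mm l j =
        A i.val l.val * G l.val j.val -
          (A i.val l.val * G l.val k) * (G k j.val / G k k) := by
      intro l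
      rw [hBA]
      simp only [hMm]
      ring
    rw [Finset.sum_congr rfl fun l _ => e1 l, Finset.sum_sub_distrib, ← Finset.sum_mul]
    rw [sum_ne_k k (fun l => A i.val l * G l j.val),
      sum_ne_k k (fun l => A i.val l * G l k)]
    rw [hAGe i.val j.val, hAGe i.val k, if_neg (fun h => i.2 h)]
    have hij : (if (i.val : Fin N) = j.val then (1:ℂ) else 0) = if i = j then 1 else 0 := by
      simp [Subtype.ext_iff]
    rw [hij]
    field_simp
    split_ifs <;> ring
  have hBinv : Gk = Mm := by
    rw [hGk]
    exact Matrix.inv_eq_right_inv hBM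
  intro i j hi hj
  rw [hBinv]
end

section
/- Let H be an N×N real symmetric matrix with an orthonormal basis of eigenvectors u₁,…,u_N ∈ ℝ^N and corresponding eigenvalues λ₁,…,λ_N. Let z ∈ ℂ with Im z > 0, let G(z) = (H − z·I)⁻¹ and m_N(z) = (1/N)·Tr G(z). Then for all indices x, y ∈ {1,…,N}, |Im(G_{xy}(z))| ≤ N · (max_{1≤α≤N} ‖u_α‖_∞²) · Im(m_N(z)). -/
/-!
Diagonalising `H` in the orthonormal eigenbasis gives the spectral resolution
`G_{xy}(z) = ∑_α u_α(x) u_α(y) / (λ_α - z)` and `Tr G(z) = ∑_α 1 / (λ_α - z)`.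
Since `Im z > 0`, every weight `Im (λ_α - z)⁻¹ = Im z / |λ_α - z|²` is positive, so
`|Im G_{xy}| ≤ ∑_α |u_α(x)| |u_α(y)| Im (λ_α - z)⁻¹ ≤ (max_α ‖u_α‖_∞)² · Im Tr G`.
-/

open Matrix Finset

section Resolvent

variable {n : Type*} [Fintype n] [DecidableEq n]

theorem Matrix.inv_eq_transpose_mul_diagonal_mul {K : Type*} [Field K] {A U : Matrix n n K}
    {d : n → K} (hU : U * Uᵀ = 1) (hAU : A * Uᵀ = Uᵀ * diagonal d) (hd : ∀ α, d α ≠ 0) :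
    A⁻¹ = Uᵀ * diagonal d⁻¹ * U := by
  refine inv_eq_right_inv ?_
  calc A * (Uᵀ * diagonal d⁻¹ * U) = Uᵀ * (diagonal d * diagonal d⁻¹) * U := by
        simp only [← Matrix.mul_assoc, hAU]
    _ = Uᵀ * U := by
        rw [diagonal_mul_diagonal]
        simp [hd]
    _ = 1 := mul_eq_one_comm.mp hU

theorem Matrix.transpose_mul_diagonal_mul_apply {R : Type*} [NonUnitalNonAssocSemiring R]
    (U : Matrix n n R) (d : n → R) (a b : n) :
    (Uᵀ * diagonal d * U) a b = ∑ α, U α a * d α * U α b := by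
  simp [mul_apply, diagonal_apply]

theorem Matrix.trace_transpose_mul_diagonal_mul {R : Type*} [CommSemiring R]
    {U : Matrix n n R} (hU : U * Uᵀ = 1) (d : n → R) :
    (Uᵀ * diagonal d * U).trace = ∑ α, d α := by
  rw [trace_mul_cycle, hU, Matrix.one_mul, trace_diagonal]

end Resolvent

section Eigenbasis

variable {n : Type*} [Fintype n] [DecidableEq n] {H : Matrix n n ℝ} {u : n → n → ℝ}
  {lam : n → ℝ}

theorem ofReal_mul_transpose_eq_one
    (horth : ∀ α β, ∑ i, u α i * u β i = if α = β then 1 else 0) :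
    (of fun α i => (u α i : ℂ)) * (of fun α i => (u α i : ℂ))ᵀ = 1 := by
  ext α β
  have h := congrArg Complex.ofReal (horth α β)
  push_cast [apply_ite Complex.ofReal] at h
  simpa [mul_apply, one_apply] using h

theorem map_ofReal_sub_smul_one_mul_transpose (heig : ∀ α, H *ᵥ u α = lam α • u α) (w : ℂ) :
    (H.map Complex.ofReal - w • 1) * (of fun α i => (u α i : ℂ))ᵀ =
      (of fun α i => (u α i : ℂ))ᵀ * diagonal fun α => (lam α : ℂ) - w := by
  ext a α
  have h : ∑ j, (H a j : ℂ) * u α j = lam α * u α a := by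
    exact_mod_cast congrFun (heig α) a
  rw [mul_diagonal]
  simp [sub_mul, mul_apply, Finset.sum_sub_distrib, h, one_apply]
  ring

end Eigenbasis

theorem Complex.ofReal_sub_ne_zero_of_im_pos {z : ℂ} (hz : 0 < z.im) (r : ℝ) :
    (r : ℂ) - z ≠ 0 := fun h =>
  hz.ne' (by simpa using congrArg Complex.im h)

theorem Complex.im_inv_ofReal_sub_pos {z : ℂ} (hz : 0 < z.im) (r : ℝ) :
    0 < ((r : ℂ) - z)⁻¹.im := by
  rw [Complex.inv_im, Complex.sub_im, Complex.ofReal_im, zero_sub, neg_neg]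
  exact div_pos hz (Complex.normSq_pos.mpr (Complex.ofReal_sub_ne_zero_of_im_pos hz r))

theorem abs_sum_mul_mul_le {ι : Type*} (s : Finset ι) {f g d : ι → ℝ} {M : ℝ}
    (hf : ∀ i ∈ s, |f i| ≤ M) (hg : ∀ i ∈ s, |g i| ≤ M) (hd : ∀ i ∈ s, 0 ≤ d i) :
    |∑ i ∈ s, f i * g i * d i| ≤ M ^ 2 * ∑ i ∈ s, d i := by
  rw [Finset.mul_sum]
  refine (abs_sum_le_sum_abs _ _).trans (sum_le_sum fun i hi => ?_)
  rw [abs_mul, abs_mul, abs_of_nonneg (hd i hi), sq]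
  have hM : 0 ≤ M := (abs_nonneg _).trans (hf i hi)
  exact mul_le_mul_of_nonneg_right (mul_le_mul (hf i hi) (hg i hi) (abs_nonneg _) hM) (hd i hi)

theorem im_green_entry_le_general (N : ℕ) (hN : 0 < N) (H : Matrix (Fin N) (Fin N) ℝ)
    (u : Fin N → Fin N → ℝ) (lam : Fin N → ℝ)
    (heig : ∀ α, H.mulVec (u α) = lam α • u α)
    (horth : ∀ α β, ∑ i, u α i * u β i = if α = β then (1 : ℝ) else 0)
    (z : ℂ) (hz : 0 < z.im)
    (G : Matrix (Fin N) (Fin N) ℂ) (hG : G = (H.map Complex.ofReal - z • 1)⁻¹)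
    (m : ℂ) (hm : m = (N : ℂ)⁻¹ * G.trace) :
    ∀ x y : Fin N,
      |(G x y).im| ≤
        (N : ℝ) *
          (Finset.univ.sup' (Finset.univ_nonempty_iff.mpr (Fin.pos_iff_nonempty.mp hN))
            (fun α => Finset.univ.sup' (Finset.univ_nonempty_iff.mpr (Fin.pos_iff_nonempty.mp hN))
              (fun i => |u α i|))) ^ 2 * m.im := by
  intro x y
  set M := univ.sup' _ fun α => univ.sup' _ fun i => |u α i|
  have hM : ∀ α i, |u α i| ≤ M := fun α i =>
    le_sup'_of_le _ (mem_univ α) (le_sup' (fun i => |u α i|) (mem_univ i))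
  have hU := ofReal_mul_transpose_eq_one horth
  have hGU := hG ▸ inv_eq_transpose_mul_diagonal_mul hU
    (map_ofReal_sub_smul_one_mul_transpose heig z)
    fun α => Complex.ofReal_sub_ne_zero_of_im_pos hz (lam α)
  have hGxy : (G x y).im = ∑ α, u α x * u α y * ((lam α : ℂ) - z)⁻¹.im := by
    simp only [hGU, transpose_mul_diagonal_mul_apply, of_apply, Pi.inv_apply, Complex.im_sum,
      Complex.im_mul_ofReal, Complex.im_ofReal_mul]
    exact sum_congr rfl fun α _ => by ring
  have hmim : m.im = (N : ℝ)⁻¹ * ∑ α, ((lam α : ℂ) - z)⁻¹.im := by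
    rw [hm, hGU, trace_transpose_mul_diagonal_mul hU]
    simp [Complex.mul_im]
  have hN' : (N : ℝ) ≠ 0 := by positivity
  calc |(G x y).im| ≤ M ^ 2 * ∑ α, ((lam α : ℂ) - z)⁻¹.im := by
        rw [hGxy]
        exact abs_sum_mul_mul_le _ (fun α _ => hM α x) (fun α _ => hM α y)
          (fun α _ => (Complex.im_inv_ofReal_sub_pos hz _).le)
    _ = N * M ^ 2 * m.im := by
        rw [hmim]
        field_simp

/-- **Green's function entries in terms of eigenvector delocalization.** Let `H` be an `N × N`
real symmetric matrix with an orthonormal basis of eigenvectors `u₁, …, u_N` and eigenvalues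
`λ₁, …, λ_N`. For `z ∈ ℂ` with `Im z > 0`, `G(z) = (H - z·I)⁻¹` and
`m_N(z) = (1/N)·Tr G(z)`, one has for all `x, y`
`|Im G_{xy}(z)| ≤ N · (max_α ‖u_α‖_∞²) · Im m_N(z)`. -/
theorem im_green_entry_le (N : ℕ) (hN : 0 < N) (H : Matrix (Fin N) (Fin N) ℝ) (hH : H.IsSymm)
    (u : Fin N → Fin N → ℝ) (lam : Fin N → ℝ)
    (heig : ∀ α, H.mulVec (u α) = lam α • u α)
    (horth : ∀ α β, ∑ i, u α i * u β i = if α = β then (1 : ℝ) else 0)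
    (z : ℂ) (hz : 0 < z.im)
    (G : Matrix (Fin N) (Fin N) ℂ) (hG : G = (H.map Complex.ofReal - z • 1)⁻¹)
    (m : ℂ) (hm : m = (N : ℂ)⁻¹ * G.trace) :
    ∀ x y : Fin N,
      |(G x y).im| ≤
        (N : ℝ) *
          (Finset.univ.sup' (Finset.univ_nonempty_iff.mpr (Fin.pos_iff_nonempty.mp hN))
            (fun α => Finset.univ.sup' (Finset.univ_nonempty_iff.mpr (Fin.pos_iff_nonempty.mp hN))
              (fun i => |u α i|))) ^ 2 * m.im :=
  im_green_entry_le_general N hN H u lam heig horth z hz G hG m hm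
end

section
/- Fix integers d ≥ 3 and ℓ ≥ 1, and let 𝒳_ℓ be the ball of radius ℓ in the infinite d-regular tree, with root o, normalized adjacency matrix H_{𝒳_ℓ} and leaf indicator 𝕀∂. For every z ∈ ℂ with Im z > 0, the matrix H_{𝒳_ℓ} − z·I − m_sc(z)·𝕀∂ is invertible, and its inverse P satisfies, for all vertices i, j of 𝒳_ℓ, P_{ij} = m_d(z) · (−m_sc(z)/√(d−1))^{dist(i,j)}, where dist denotes the graph distance in 𝒳_ℓ. -/
open scoped Classical

noncomputable section

/-- Vertices of the ball of radius `ℓ` in the infinite `m`-ary rooted tree: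
words over `Fin m` of length at most `ℓ`. -/
def TreeBallY (m ℓ : ℕ) : Type := {l : List (Fin m) // l.length ≤ ℓ}

instance (m ℓ : ℕ) : DecidableEq (TreeBallY m ℓ) :=
  inferInstanceAs (DecidableEq {l : List (Fin m) // l.length ≤ ℓ})

instance (m ℓ : ℕ) : Fintype (TreeBallY m ℓ) :=
  Fintype.ofSurjective
    (fun p : (Σ k : Fin (ℓ + 1), List.Vector (Fin m) k) =>
      (⟨p.2.toList, by
        have h1 : p.2.toList.length = (p.1 : ℕ) := p.2.toList_length
        have h2 := p.1.isLt
        omega⟩ : TreeBallY m ℓ))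
    (fun l => ⟨⟨⟨l.1.length, Nat.lt_succ_of_le l.2⟩, ⟨l.1, rfl⟩⟩, rfl⟩)

/-- The tree structure on the ball of radius `ℓ` of the `m`-ary rooted tree:
`x` is adjacent to `y` iff one of them is obtained from the other by appending one letter
(i.e. one is the parent of the other). -/
def treeGraphY (m ℓ : ℕ) : SimpleGraph (TreeBallY m ℓ) :=
  SimpleGraph.fromRel (fun x y => ∃ a : Fin m, y.1 = x.1 ++ [a])

/-- The root of the tree: the empty word. -/
def rootY (m ℓ : ℕ) : TreeBallY m ℓ := ⟨[], Nat.zero_le _⟩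

/-- The normalized adjacency matrix `A/√(d-1)` of the ball `𝒴_ℓ` of radius `ℓ` in the
infinite `(d-1)`-ary tree. -/
def HmatY (d ℓ : ℕ) : Matrix (TreeBallY (d - 1) ℓ) (TreeBallY (d - 1) ℓ) ℂ :=
  fun x y => if (treeGraphY (d - 1) ℓ).Adj x y then (Real.sqrt ((d : ℝ) - 1) : ℂ)⁻¹ else 0

/-- The leaf indicator `𝕀∂` of `𝒴_ℓ`: the diagonal 0-1 matrix whose entry at `x` is `1`
exactly when `dist(x, o) = ℓ`. -/
def IbdY (d ℓ : ℕ) : Matrix (TreeBallY (d - 1) ℓ) (TreeBallY (d - 1) ℓ) ℂ :=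
  Matrix.diagonal (fun x => if (treeGraphY (d - 1) ℓ).dist (rootY (d - 1) ℓ) x = ℓ then 1 else 0)

/-- Vertices of the ball `𝒳_ℓ` of radius `ℓ` in the infinite `d`-regular tree: the root
(`none`), or a first step in `Fin d` followed by a word over `Fin (d-1)` of length at most
`ℓ - 1`. -/
def TreeBallX (d ℓ : ℕ) : Type := Option (Fin d × TreeBallY (d - 1) (ℓ - 1))

instance (d ℓ : ℕ) : DecidableEq (TreeBallX d ℓ) :=
  inferInstanceAs (DecidableEq (Option (Fin d × TreeBallY (d - 1) (ℓ - 1))))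

instance (d ℓ : ℕ) : Fintype (TreeBallX d ℓ) :=
  inferInstanceAs (Fintype (Option (Fin d × TreeBallY (d - 1) (ℓ - 1))))

/-- The tree structure on the ball `𝒳_ℓ` of radius `ℓ` of the `d`-regular tree: the root is
adjacent to the `d` one-step vertices, and within each branch two vertices are adjacent iff one
is the parent of the other. -/
def treeGraphX (d ℓ : ℕ) : SimpleGraph (TreeBallX d ℓ) :=
  SimpleGraph.fromRel (fun x y =>
    (∃ a : Fin d, x = none ∧ y = some (a, ⟨[], Nat.zero_le _⟩)) ∨
    (∃ (a : Fin d) (s t : TreeBallY (d - 1) (ℓ - 1)),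
      x = some (a, s) ∧ y = some (a, t) ∧ ∃ b : Fin (d - 1), t.1 = s.1 ++ [b]))

/-- The root of the `d`-regular tree ball `𝒳_ℓ`. -/
def rootX (d ℓ : ℕ) : TreeBallX d ℓ := none

/-- The normalized adjacency matrix `A/√(d-1)` of the ball `𝒳_ℓ` of radius `ℓ` in the
infinite `d`-regular tree. -/
def HmatX (d ℓ : ℕ) : Matrix (TreeBallX d ℓ) (TreeBallX d ℓ) ℂ :=
  fun x y => if (treeGraphX d ℓ).Adj x y then (Real.sqrt ((d : ℝ) - 1) : ℂ)⁻¹ else 0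

/-- The leaf indicator `𝕀∂` of `𝒳_ℓ`. -/
def IbdX (d ℓ : ℕ) : Matrix (TreeBallX d ℓ) (TreeBallX d ℓ) ℂ :=
  Matrix.diagonal (fun x => if (treeGraphX d ℓ).dist (rootX d ℓ) x = ℓ then 1 else 0)

/-- Longest common prefix of two words. -/
def lcp {m : ℕ} : List (Fin m) → List (Fin m) → List (Fin m)
  | [], _ => []
  | _ :: _, [] => []
  | a :: s, b :: t => if a = b then a :: lcp s t else []

theorem lcp_length_le_left {m : ℕ} : ∀ s t : List (Fin m), (lcp s t).length ≤ s.length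
  | [], _ => by simp [lcp]
  | _ :: _, [] => by simp [lcp]
  | a :: s, b :: t => by
    by_cases h : a = b
    · simp only [lcp, if_pos h, List.length_cons]
      exact Nat.succ_le_succ (lcp_length_le_left s t)
    · simp [lcp, h]

/-- The least common ancestor of two vertices of `𝒴_ℓ`: their longest common prefix. -/
def lcaY {m ℓ : ℕ} (x y : TreeBallY m ℓ) : TreeBallY m ℓ :=
  ⟨lcp x.1 y.1, le_trans (lcp_length_le_left _ _) x.2⟩

/-- `anc(x,y)`: the distance from the least common ancestor of `x` and `y` to the root `o`. -/
def ancY {m ℓ : ℕ} (x y : TreeBallY m ℓ) : ℕ :=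
  (treeGraphY m ℓ).dist (rootY m ℓ) (lcaY x y)

end

/-! The ball is the rooted tree in which every non-root vertex is joined exactly to its parent.
In a tree, a vertex `i ≠ k` has exactly one neighbour closer to `k`, and all its other neighbours
are one step farther, so `∑_{j ∼ i} w ^ dist(j,k) = w ^ (D - 1) + (deg i - 1) w ^ (D + 1)` with
`D = dist(i,k)`. For `w = -m_sc/√(d-1)` and the diagonal correction `m_sc (d - deg i)/(d - 1)`,
which is `m_sc 𝕀∂` because leaves have degree `1` and all other vertices degree `d`, every row
identity of `(H - z - m_sc 𝕀∂) P = 1` reduces to `m_sc² + z m_sc + 1 = 0`; the normalisation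
`m_d(z)` is finite because its inverse has negative imaginary part. -/

open Finset Matrix

namespace SimpleGraph

variable {V : Type*} {G : SimpleGraph V}

structure IsRootedTree (G : SimpleGraph V) (r : V) (p : V → V) (h : V → ℕ) : Prop where
  adj_iff : ∀ x y, G.Adj x y ↔ (x ≠ r ∧ p x = y) ∨ (y ≠ r ∧ p y = x)
  depth_parent : ∀ v, v ≠ r → h (p v) + 1 = h v
  depth_root : h r = 0

namespace IsRootedTree

variable {r : V} {p : V → V} {h : V → ℕ}

theorem depth_eq_of_adj (hT : G.IsRootedTree r p h) {x y : V} (hxy : G.Adj x y) :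
    h x = h y + 1 ∨ h y = h x + 1 := by
  rcases (hT.adj_iff x y).mp hxy with ⟨hx, rfl⟩ | ⟨hy, rfl⟩
  · exact .inl (hT.depth_parent x hx).symm
  · exact .inr (hT.depth_parent y hy).symm

theorem eq_parent_of_adj_of_depth_lt (hT : G.IsRootedTree r p h) {x y : V} (hxy : G.Adj x y)
    (hlt : h y < h x) : y = p x := by
  rcases (hT.adj_iff x y).mp hxy with ⟨-, rfl⟩ | ⟨hy, rfl⟩
  · rfl
  · have := hT.depth_parent y hy
    omega

theorem exists_walk_root_length_eq (hT : G.IsRootedTree r p h) (v : V) :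
    ∃ w : G.Walk v r, w.length = h v := by
  induction hn : h v generalizing v with
  | zero =>
    obtain rfl : v = r := by
      by_contra hv
      have := hT.depth_parent v hv
      omega
    exact ⟨.nil, rfl⟩
  | succ n ih =>
    have hv : v ≠ r := by
      rintro rfl
      rw [hT.depth_root] at hn
      omega
    obtain ⟨w, hw⟩ := ih (p v) (by have := hT.depth_parent v hv; omega)
    exact ⟨.cons ((hT.adj_iff _ _).mpr (.inl ⟨hv, rfl⟩)) w, by simp [hw]⟩

theorem depth_le_length_add (hT : G.IsRootedTree r p h) {u v : V} (w : G.Walk u v) :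
    h u ≤ w.length + h v := by
  induction w with
  | nil => simp
  | cons hadj q ih =>
    have := hT.depth_eq_of_adj hadj
    simp only [Walk.length_cons]
    omega

theorem dist_root (hT : G.IsRootedTree r p h) (v : V) : G.dist v r = h v := by
  obtain ⟨w, hw⟩ := hT.exists_walk_root_length_eq v
  obtain ⟨w', hw'⟩ := Reachable.exists_walk_length_eq_dist ⟨w⟩
  have := hT.depth_le_length_add w'
  have := G.dist_le w
  rw [hT.depth_root] at *
  omega

theorem connected (hT : G.IsRootedTree r p h) : G.Connected where
  preconnected u v :=
    let ⟨wu, _⟩ := hT.exists_walk_root_length_eq u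
    let ⟨wv, _⟩ := hT.exists_walk_root_length_eq v
    ⟨wu.append wv.reverse⟩
  nonempty := ⟨r⟩

/-- On a cycle, the two neighbours of a vertex of maximal depth would both be its parent. -/
theorem isAcyclic (hT : G.IsRootedTree r p h) : G.IsAcyclic := by
  intro u c hc
  obtain ⟨x, hx, hmax⟩ := c.support.toFinset.exists_max_image h ⟨u, by simp⟩
  rw [List.mem_toFinset] at hx
  set c' := c.rotate x hx
  have hc' : c'.IsCycle := (Walk.isCycle_rotate hx).mpr hc
  have hlow : ∀ n, G.Adj x (c'.getVert n) → c'.getVert n = p x := fun n hadj =>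
    hT.eq_parent_of_adj_of_depth_lt hadj <| by
      have := hmax _ <| List.mem_toFinset.mpr <|
        (c.mem_support_rotate_iff x hx).mp (c'.getVert_mem_support n)
      have := hT.depth_eq_of_adj hadj
      omega
  exact hc'.snd_ne_penultimate <| (hlow 1 (c'.adj_snd hc'.not_nil)).trans
    (hlow _ (c'.adj_penultimate hc'.not_nil).symm).symm

theorem isTree (hT : G.IsRootedTree r p h) : G.IsTree := ⟨hT.connected, hT.isAcyclic⟩

theorem degree_eq [Fintype V] [DecidableEq V] [DecidableRel G.Adj] (hT : G.IsRootedTree r p h)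
    (v : V) : G.degree v = #{y | y ≠ r ∧ p y = v} + if v = r then 0 else 1 := by
  have hnbr :
      G.neighborFinset v = ({y | (v ≠ r ∧ p v = y) ∨ (y ≠ r ∧ p y = v)} : Finset V) := by
    ext y
    simp [hT.adj_iff]
  rw [← card_neighborFinset_eq_degree, hnbr]
  by_cases hv : v = r
  · simp [hv]
  · have hpv : p v ∉ ({y | y ≠ r ∧ p y = v} : Finset V) := by
      simp only [Finset.mem_filter, Finset.mem_univ, true_and, not_and]
      intro hpr hpp
      have := hT.depth_parent v hv
      have := hT.depth_parent (p v) hpr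
      rw [hpp] at this
      omega
    rw [if_neg hv, ← card_insert_of_notMem hpv]
    congr 1
    ext y
    simp [hv, eq_comm]

end IsRootedTree

theorem IsTree.existsUnique_adj_dist_add_one_eq (hG : G.IsTree) {i k : V} (hik : i ≠ k) :
    ∃! j, G.Adj i j ∧ G.dist j k + 1 = G.dist i k := by
  obtain ⟨p, hp, hpl⟩ := hG.connected.exists_path_of_dist i k
  cases p with
  | nil => exact absurd rfl hik
  | @cons _ j₀ _ hadj q =>
    have hq := G.dist_le q
    have hj₀ : G.dist j₀ k + 1 = G.dist i k := by
      have := hG.dist_eq_dist_add_one_of_adj k hadj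
      rw [dist_comm (u := k), dist_comm (u := k)] at this
      rw [Walk.length_cons] at hpl
      omega
    refine ⟨j₀, ⟨hadj, hj₀⟩, fun j ⟨hij, hj⟩ => ?_⟩
    obtain ⟨q', hq', hq'l⟩ := hG.connected.exists_path_of_dist j k
    have hi : i ∉ q'.support := fun hi => by
      have := G.dist_le (q'.dropUntil i hi)
      have := q'.length_dropUntil_le_length hi
      omega
    have := (hG.existsUnique_path i k).unique (hq'.cons (h := hij) hi) hp
    simpa [Walk.snd_cons] using congrArg Walk.snd this

theorem sum_neighborFinset_dist_self {k : V} [Fintype (G.neighborSet k)] {M : Type*}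
    [AddCommMonoid M] (f : ℕ → M) :
    ∑ j ∈ G.neighborFinset k, f (G.dist j k) = G.degree k • f 1 := by
  rw [Finset.sum_congr rfl fun j hj => by
      rw [dist_comm, dist_eq_one_iff_adj.mpr ((mem_neighborFinset _ _ _).mp hj)],
    Finset.sum_const, card_neighborFinset_eq_degree]

theorem IsTree.sum_neighborFinset_dist (hG : G.IsTree) {i k : V} [Fintype (G.neighborSet i)]
    {M : Type*} [AddCommMonoid M] (f : ℕ → M) (hik : i ≠ k) :
    ∑ j ∈ G.neighborFinset i, f (G.dist j k) =
      f (G.dist i k - 1) + (G.degree i - 1) • f (G.dist i k + 1) := by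
  obtain ⟨j₀, ⟨hadj, hj₀⟩, huniq⟩ := hG.existsUnique_adj_dist_add_one_eq hik
  have hmem : j₀ ∈ G.neighborFinset i := (mem_neighborFinset _ _ _).mpr hadj
  rw [← Finset.add_sum_erase _ _ hmem, ← hj₀, Nat.add_sub_cancel, hj₀,
    Finset.sum_congr rfl fun j hj => ?_, Finset.sum_const, card_erase_of_mem hmem,
    card_neighborFinset_eq_degree]
  obtain ⟨hjj₀, hj⟩ := Finset.mem_erase.mp hj
  have hij := (mem_neighborFinset _ _ _).mp hj
  have := hG.dist_eq_dist_add_one_of_adj k hij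
  rw [dist_comm (u := k), dist_comm (u := k)] at this
  exact congrArg f (this.resolve_left fun h' => hjj₀ (huniq j ⟨hij, h'.symm⟩))

/-- Compared with the `D`-regular tree, a vertex `i` misses `D - deg i` branches, each of which
contributes the self-energy `m / (D - 1)` to the diagonal. -/
theorem IsTree.mul_pow_dist_eq_smul_one [Fintype V] [DecidableEq V] [DecidableRel G.Adj]
    (hG : G.IsTree) {𝕜 : Type*} [Field 𝕜] {D s z m : 𝕜} (hs : s ≠ 0)
    (hsD : s ^ 2 = D - 1) (hm : m ^ 2 + z * m + 1 = 0) :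
    (s⁻¹ • G.adjMatrix 𝕜 - z • 1 - m • diagonal fun i => (D - G.degree i) / (D - 1)) *
        of (fun i j => (-(m / s)) ^ G.dist i j) =
      (-z - D / (D - 1) * m) • 1 := by
  obtain rfl : D = s ^ 2 + 1 := by linear_combination -hsD
  ext i k
  simp only [Matrix.sub_mul, Matrix.smul_mul, Matrix.one_mul, diagonal_mul, Matrix.sub_apply,
    Matrix.smul_apply, adjMatrix_mul_apply, of_apply, one_apply, smul_eq_mul, add_sub_cancel_right]
  by_cases hik : i = k
  · subst hik
    rw [sum_neighborFinset_dist_self, if_pos rfl, dist_self, nsmul_eq_mul]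
    field_simp
    ring
  · rw [hG.sum_neighborFinset_dist _ hik, if_neg hik, nsmul_eq_mul]
    obtain ⟨n, hn⟩ : ∃ n, G.dist i k = n + 1 :=
      Nat.exists_eq_succ_of_ne_zero (hG.connected.pos_dist_of_ne hik).ne'
    have hdeg : 1 ≤ G.degree i := by
      obtain ⟨j, ⟨hij, -⟩, -⟩ := hG.existsUnique_adj_dist_add_one_eq hik
      exact (G.degree_pos_iff_exists_adj i).mpr ⟨j, hij⟩
    have key : s⁻¹ + (G.degree i - 1) * s⁻¹ * (-(m / s)) ^ 2 -
        (z + m * ((s ^ 2 + 1 - G.degree i) / s ^ 2)) * -(m / s) = 0 := by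
      field_simp
      linear_combination s ^ 2 * hm
    rw [hn, Nat.add_sub_cancel, Nat.cast_sub hdeg, Nat.cast_one]
    linear_combination (-(m / s)) ^ n * key

end SimpleGraph

namespace TreeBallX

variable {d ℓ : ℕ}

def parent : TreeBallX d ℓ → TreeBallX d ℓ
  | none => none
  | some (a, s) =>
    if s.1 = [] then none
    else some (a, ⟨s.1.dropLast, (List.dropLast_prefix _).length_le.trans s.2⟩)

def depth : TreeBallX d ℓ → ℕ
  | none => 0
  | some (_, s) => s.1.length + 1

theorem parent_some_eq_iff {b : Fin d} {t : TreeBallY (d - 1) (ℓ - 1)} {x : TreeBallX d ℓ} :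
    parent (some (b, t)) = x ↔
      (x = none ∧ t.1 = []) ∨ ∃ s : TreeBallY (d - 1) (ℓ - 1), x = some (b, s) ∧
        ∃ c, t.1 = s.1 ++ [c] := by
  by_cases ht : t.1 = []
  · have hnil : parent (some (b, t)) = none := by
      simp only [parent, ht, ↓reduceIte]
      rfl
    rw [hnil]
    constructor
    · rintro rfl
      exact .inl ⟨rfl, ht⟩
    · rintro (⟨rfl, -⟩ | ⟨s, -, c, hc⟩)
      · rfl
      · simp [hc] at ht
  · have hcons : parent (some (b, t)) =
        some (b, ⟨t.1.dropLast, (List.dropLast_prefix _).length_le.trans t.2⟩) := by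
      simp only [parent, ht, ↓reduceIte]
      rfl
    rw [hcons]
    constructor
    · rintro rfl
      exact .inr ⟨_, rfl, t.1.getLast ht, (List.dropLast_append_getLast ht).symm⟩
    · rintro (⟨-, ht'⟩ | ⟨s, rfl, c, hc⟩)
      · exact absurd ht' ht
      · simp only [hc, List.dropLast_concat]
        rfl

theorem depth_parent (v : TreeBallX d ℓ) (hv : v ≠ rootX d ℓ) :
    depth (parent v) + 1 = depth v := by
  rcases v with _ | ⟨a, s⟩
  · exact absurd rfl hv
  by_cases hs : s.1 = []
  · simp [parent, depth, hs]
  · have := List.length_pos_iff.mpr hs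
    simp only [parent, depth, hs, ↓reduceIte, List.length_dropLast]
    omega

theorem isRootedTree_treeGraphX (d ℓ : ℕ) :
    (treeGraphX d ℓ).IsRootedTree (rootX d ℓ) parent depth where
  adj_iff x y := by
    have hrel : ∀ x y : TreeBallX d ℓ,
        ((∃ a : Fin d, x = none ∧ y = some (a, ⟨[], Nat.zero_le _⟩)) ∨
          (∃ (a : Fin d) (s t : TreeBallY (d - 1) (ℓ - 1)),
            x = some (a, s) ∧ y = some (a, t) ∧ ∃ b : Fin (d - 1), t.1 = s.1 ++ [b])) ↔
        y ≠ none ∧ parent y = x := by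
      rintro x (_ | ⟨b, t⟩)
      · simpa using fun h => absurd rfl h
      · rw [parent_some_eq_iff]
        constructor
        · rintro (⟨a, rfl, h⟩ | ⟨a, s, t', rfl, h, c, hc⟩)
          · cases h
            exact ⟨Option.some_ne_none _, .inl ⟨rfl, rfl⟩⟩
          · cases h
            exact ⟨Option.some_ne_none _, .inr ⟨s, rfl, c, hc⟩⟩
        · rintro ⟨-, ⟨rfl, ht⟩ | ⟨s, rfl, c, hc⟩⟩
          · obtain rfl : t = ⟨[], Nat.zero_le _⟩ := Subtype.ext ht
            exact .inl ⟨b, rfl, rfl⟩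
          · exact .inr ⟨b, s, t, rfl, rfl, c, hc⟩
    have hne : ∀ u v : TreeBallX d ℓ, u ≠ rootX d ℓ → parent u = v → u ≠ v := by
      rintro u v hu rfl h
      have := depth_parent u hu
      rw [← h] at this
      omega
    rw [treeGraphX, SimpleGraph.fromRel_adj, hrel, hrel]
    constructor
    · rintro ⟨-, h | h⟩
      · exact .inr h
      · exact .inl h
    · rintro (⟨hx, hxy⟩ | ⟨hy, hyx⟩)
      · exact ⟨hne x y hx hxy, .inr ⟨hx, hxy⟩⟩
      · exact ⟨(hne y x hy hyx).symm, .inl ⟨hy, hyx⟩⟩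
  depth_parent := depth_parent
  depth_root := rfl

theorem card_children_root :
    #{y : TreeBallX d ℓ | y ≠ rootX d ℓ ∧ parent y = rootX d ℓ} = d := by
  have hchildren :
      ({y : TreeBallX d ℓ | y ≠ rootX d ℓ ∧ parent y = rootX d ℓ} : Finset _) =
        univ.map ⟨(fun a => some (a, rootY _ _) : Fin d → TreeBallX d ℓ),
          fun a b h => by cases h; rfl⟩ := by
    ext y
    simp only [Finset.mem_filter, Finset.mem_univ, true_and]
    constructor
    · rintro ⟨hy, hpy⟩
      rcases y with _ | ⟨b, t⟩
      · exact absurd rfl hy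
      · obtain ⟨-, ht⟩ | ⟨s, hs, -⟩ := parent_some_eq_iff.mp hpy
        · obtain rfl : t = rootY _ _ := Subtype.ext ht
          exact Finset.mem_map.mpr ⟨b, mem_univ _, rfl⟩
        · cases hs
    · intro hy
      obtain ⟨a, -, rfl⟩ := Finset.mem_map.mp hy
      exact ⟨Option.some_ne_none _, parent_some_eq_iff.mpr (.inl ⟨rfl, rfl⟩)⟩
  rw [hchildren]
  exact (card_map _).trans (by simp)

theorem card_children_node {v : TreeBallX d ℓ} {a : Fin d} {s : TreeBallY (d - 1) (ℓ - 1)}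
    (hv : v = some (a, s)) :
    #{y : TreeBallX d ℓ | y ≠ rootX d ℓ ∧ parent y = v} =
      if s.1.length = ℓ - 1 then 0 else d - 1 := by
  split_ifs with hs
  · refine Finset.card_eq_zero.mpr (Finset.filter_eq_empty_iff.mpr ?_)
    rintro (_ | ⟨b, t⟩) - ⟨hy, hpy⟩
    · exact hy rfl
    · obtain ⟨h, -⟩ | ⟨s', hs', c, hc⟩ := parent_some_eq_iff.mp (hpy.trans hv)
      · cases h
      · cases hs'
        have := congrArg List.length hc
        have := t.2
        simp only [List.length_append, List.length_singleton] at *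
        omega
  · have hlen : ∀ c : Fin (d - 1), (s.1 ++ [c]).length ≤ ℓ - 1 := fun c => by
      have := s.2
      simp only [List.length_append, List.length_singleton]
      omega
    have hchildren : ({y : TreeBallX d ℓ | y ≠ rootX d ℓ ∧ parent y = v} : Finset _) =
        univ.map ⟨(fun c => some (a, ⟨s.1 ++ [c], hlen c⟩) : Fin (d - 1) → TreeBallX d ℓ),
          fun b c h => by
            simpa using congrArg (·.2.1) (Option.some_injective _ h)⟩ := by
      ext y
      simp only [Finset.mem_filter, Finset.mem_univ, true_and]
      constructor
      · rintro ⟨hy, hpy⟩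
        rcases y with _ | ⟨b, t⟩
        · exact absurd rfl hy
        · obtain ⟨h, -⟩ | ⟨s', hs', c, hc⟩ := parent_some_eq_iff.mp (hpy.trans hv)
          · cases h
          · cases hs'
            obtain rfl : t = ⟨_, hlen c⟩ := Subtype.ext hc
            exact Finset.mem_map.mpr ⟨c, mem_univ _, rfl⟩
      · intro hy
        obtain ⟨c, -, rfl⟩ := Finset.mem_map.mp hy
        exact ⟨Option.some_ne_none _,
          (parent_some_eq_iff.mpr (.inr ⟨s, rfl, c, rfl⟩)).trans hv.symm⟩
    rw [hchildren]
    exact (card_map _).trans (by simp)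

theorem degree_treeGraphX (hd : 1 ≤ d) (hℓ : 1 ≤ ℓ) (v : TreeBallX d ℓ) :
    (treeGraphX d ℓ).degree v = if depth v = ℓ then 1 else d := by
  rw [(isRootedTree_treeGraphX d ℓ).degree_eq]
  by_cases hv : v = rootX d ℓ
  · subst hv
    rw [card_children_root, if_pos rfl, if_neg (by simp [rootX, depth]; omega), add_zero]
  · obtain ⟨⟨a, s⟩, hv'⟩ := Option.ne_none_iff_exists'.mp hv
    have hdepth : depth v = s.1.length + 1 := by subst hv'; rfl
    have := s.2
    rw [card_children_node hv', if_neg hv, hdepth]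
    split_ifs <;> omega

end TreeBallX

theorem neg_sub_ofReal_mul_ne_zero {r : ℝ} (hr : 0 < r) {z m : ℂ} (hz : 0 < z.im)
    (hm : 0 ≤ m.im) : -z - r * m ≠ 0 := by
  have him : (-z - r * m).im < 0 := by
    simp only [Complex.sub_im, Complex.neg_im, Complex.im_ofReal_mul]
    nlinarith
  exact fun h => him.ne (by rw [h, Complex.zero_im])

theorem HmatX_eq_smul_adjMatrix (d ℓ : ℕ) :
    HmatX d ℓ = (Real.sqrt ((d : ℝ) - 1) : ℂ)⁻¹ • (treeGraphX d ℓ).adjMatrix ℂ := by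
  ext i j
  simp [HmatX, SimpleGraph.adjMatrix_apply]

theorem IbdX_eq_diagonal_degree {d ℓ : ℕ} (hd : 2 ≤ d) (hℓ : 1 ≤ ℓ) :
    IbdX d ℓ = diagonal fun i => ((d : ℂ) - (treeGraphX d ℓ).degree i) / ((d : ℂ) - 1) := by
  have hd1 : (d : ℂ) - 1 ≠ 0 := by
    rw [sub_ne_zero]
    exact_mod_cast (by omega : d ≠ 1)
  refine congrArg diagonal (funext fun i => ?_)
  rw [SimpleGraph.dist_comm, (TreeBallX.isRootedTree_treeGraphX d ℓ).dist_root,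
    TreeBallX.degree_treeGraphX (by omega) hℓ]
  split_ifs
  · simp [div_self hd1]
  · simp

/-- **Green's function of the `d`-regular tree ball.** Fix `d ≥ 3`, `ℓ ≥ 1`, and `z ∈ ℂ` with
`Im z > 0`; let `m_sc(z)` be the unique root of `m² + z m + 1 = 0` with positive imaginary part
and `m_d(z) = 1/(-z - (d/(d-1)) m_sc(z))`. Then `H_{𝒳_ℓ} - z·I - m_sc(z)·𝕀∂` is invertible and
its inverse `P` satisfies `P_{ij} = m_d(z) · (-m_sc(z)/√(d-1))^{dist(i,j)}`. -/
theorem green_function_regular_tree_ball (d ℓ : ℕ) (hd : 3 ≤ d) (hℓ : 1 ≤ ℓ)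
    (z msc : ℂ) (hz : 0 < z.im)
    (hmsc : msc ^ 2 + z * msc + 1 = 0) (him : 0 < msc.im) :
    IsUnit (HmatX d ℓ - z • (1 : Matrix (TreeBallX d ℓ) (TreeBallX d ℓ) ℂ) - msc • IbdX d ℓ) ∧
    ∀ i j : TreeBallX d ℓ,
      ((HmatX d ℓ - z • 1 - msc • IbdX d ℓ)⁻¹) i j =
        (-z - ((d : ℂ) / ((d : ℂ) - 1)) * msc)⁻¹ *
          (-(msc / (Real.sqrt ((d : ℝ) - 1) : ℂ))) ^ ((treeGraphX d ℓ).dist i j) := by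
  set s : ℂ := (Real.sqrt ((d : ℝ) - 1) : ℂ)
  have hd1 : (0 : ℝ) < d - 1 := by
    have : (3 : ℝ) ≤ d := by exact_mod_cast hd
    linarith
  have hs : s ≠ 0 := Complex.ofReal_ne_zero.mpr (Real.sqrt_pos.mpr hd1).ne'
  have hsd : s ^ 2 = (d : ℂ) - 1 := by
    rw [← Complex.ofReal_pow, Real.sq_sqrt hd1.le]
    push_cast
    ring
  set X : ℂ := -z - (d : ℂ) / ((d : ℂ) - 1) * msc
  have hX : X ≠ 0 := by
    have hr : (d : ℂ) / ((d : ℂ) - 1) = ((d / (d - 1) : ℝ) : ℂ) := by push_cast; ring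
    simpa only [X, hr] using neg_sub_ofReal_mul_ne_zero (div_pos (by linarith) hd1) hz him.le
  have hinv : (HmatX d ℓ - z • 1 - msc • IbdX d ℓ) *
      (X⁻¹ • of fun i j => (-(msc / s)) ^ (treeGraphX d ℓ).dist i j) = 1 := by
    rw [Matrix.mul_smul, HmatX_eq_smul_adjMatrix, IbdX_eq_diagonal_degree (by omega) hℓ,
      (TreeBallX.isRootedTree_treeGraphX d ℓ).isTree.mul_pow_dist_eq_smul_one hs hsd hmsc,
      smul_smul, inv_mul_cancel₀ hX, one_smul]
  refine ⟨(isUnit_iff_isUnit_det _).mpr (isUnit_det_of_right_inverse hinv), fun i j => ?_⟩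
  rw [inv_eq_right_inv hinv]
  rfl
end

section
/- Fix integers d ≥ 3 and ℓ ≥ 1, and let 𝒴_ℓ be the ball of radius ℓ in the infinite (d−1)-ary tree, with root o, normalized adjacency matrix H_{𝒴_ℓ} and leaf indicator 𝕀∂. For every z ∈ ℂ with Im z > 0, the matrix H_{𝒴_ℓ} − z·I − m_sc(z)·𝕀∂ is invertible, and its inverse P satisfies, for all vertices i, j of 𝒴_ℓ, P_{ij} = m_d(z) · (1 − (−m_sc(z)/√(d−1))^{2·anc(i,j)+2}) · (−m_sc(z)/√(d−1))^{dist(i,j)}, where dist is the graph distance in 𝒴_ℓ and anc(i,j) is the distance from the least common ancestor of i and j to the root o. In particular, P_{oi} = m_sc(z) · (−m_sc(z)/√(d−1))^{dist(o,i)} for every vertex i. -/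
open scoped Classical

/-!
Put `s = √(d-1)` and `u = -m_sc/s`. The inverse is
`G(x, y) = m_d (u^{dist(x,y)} - u^{|x|+1} u^{|y|+1})`, where `|x| = dist(o, x)`; this is the
claimed formula because `dist(x,y) + 2 anc(x,y) = |x| + |y|`. Since `s u = -m_sc`, the row of
`H - z - m_sc 𝕀∂` at any vertex `x`, leaf or not, acts on `g` as
`s⁻¹ (g(parent) + ∑_children (g(child) - u g(x))) - (z + m_sc) g(x)`: the boundary term
`m_sc 𝕀∂` stands in for the children a leaf is missing. As `(z + m_sc) u = s⁻¹`, for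
`g = u^{dist(·,y)}` only the neighbour of `x` towards `y` breaks the geometric decay, and the
result is `m_d⁻¹ δ_{xy}` up to a defect in the row of the root, which the rank-one term cancels.
-/

open SimpleGraph

theorem List.prefix_antisymm {α : Type*} {s t : List α} (h₁ : s <+: t) (h₂ : t <+: s) : s = t :=
  h₁.eq_of_length (le_antisymm h₁.length_le h₂.length_le)

section lcp

variable {m : ℕ}

theorem prefix_lcp_iff {c : List (Fin m)} :
    ∀ {s t : List (Fin m)}, c <+: lcp s t ↔ c <+: s ∧ c <+: t
  | [], t => by simp only [lcp]; grind
  | a :: s, [] => by simp only [lcp]; grind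
  | a :: s, b :: t => by
    cases c with
    | nil => simp
    | cons e c =>
      by_cases hab : a = b
      · subst hab
        simp only [lcp, if_pos, List.cons_prefix_cons, prefix_lcp_iff]
        tauto
      · simp only [lcp, hab, List.cons_prefix_cons]
        grind

theorem lcp_prefix_left (s t : List (Fin m)) : lcp s t <+: s :=
  (prefix_lcp_iff.1 (List.prefix_refl _)).1

theorem lcp_prefix_right (s t : List (Fin m)) : lcp s t <+: t :=
  (prefix_lcp_iff.1 (List.prefix_refl _)).2

theorem lcp_eq_left_of_prefix {s t : List (Fin m)} (h : s <+: t) : lcp s t = s :=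
  List.prefix_antisymm (lcp_prefix_left s t) (prefix_lcp_iff.2 ⟨List.prefix_refl s, h⟩)

theorem lcp_concat (x y : List (Fin m)) (a : Fin m) :
    lcp (x ++ [a]) y = if x ++ [a] <+: y then x ++ [a] else lcp x y := by
  split_ifs with h
  · exact lcp_eq_left_of_prefix h
  · have hc : ∀ c, c <+: lcp (x ++ [a]) y ↔ c <+: lcp x y := fun c => by
      rw [prefix_lcp_iff, prefix_lcp_iff, List.prefix_concat_iff]
      constructor
      · rintro ⟨rfl | hcx, hcy⟩
        exacts [absurd hcy h, ⟨hcx, hcy⟩]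
      · exact fun ⟨hcx, hcy⟩ => ⟨Or.inr hcx, hcy⟩
    exact List.prefix_antisymm ((hc _).1 (List.prefix_refl _)) ((hc _).2 (List.prefix_refl _))

theorem lcp_concat_length (x y : List (Fin m)) (a : Fin m) :
    (lcp (x ++ [a]) y).length = (lcp x y).length ∨
      (lcp (x ++ [a]) y).length = x.length + 1 ∧ (lcp x y).length = x.length := by
  rw [lcp_concat]
  split_ifs with h
  · exact Or.inr ⟨by simp, by rw [lcp_eq_left_of_prefix ((List.prefix_append _ _).trans h)]⟩
  · exact Or.inl rfl

end lcp

namespace TreeBallY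

variable {m ℓ : ℕ}

theorem adj_iff {x y : TreeBallY m ℓ} :
    (treeGraphY m ℓ).Adj x y ↔ (∃ a, y.1 = x.1 ++ [a]) ∨ ∃ a, x.1 = y.1 ++ [a] := by
  rw [treeGraphY, fromRel_adj, and_iff_right_iff_imp]
  rintro (⟨a, h⟩ | ⟨a, h⟩) rfl <;> simpa using congrArg List.length h

theorem exists_walk_of_append (r : List (Fin m)) :
    ∀ (x y : TreeBallY m ℓ), y.1 = x.1 ++ r →
      ∃ w : (treeGraphY m ℓ).Walk x y, w.length = r.length := by
  induction r with
  | nil =>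
    intro x y h
    obtain rfl : x = y := Subtype.ext (by simp [h])
    exact ⟨Walk.nil, rfl⟩
  | cons a r ih =>
    intro x y h
    have hy := y.2
    let x' : TreeBallY m ℓ := ⟨x.1 ++ [a], by simp [h] at hy ⊢; omega⟩
    obtain ⟨w, hw⟩ := ih x' y (by simp [x', h])
    exact ⟨Walk.cons (adj_iff.2 (Or.inl ⟨a, rfl⟩)) w, by simp [hw]⟩

theorem length_add_length_le_length_walk {x y : TreeBallY m ℓ} (w : (treeGraphY m ℓ).Walk x y) :
    x.1.length + y.1.length ≤ w.length + 2 * (lcp x.1 y.1).length := by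
  induction w with
  | nil => rw [lcp_eq_left_of_prefix (List.prefix_refl _), Walk.length_nil]; omega
  | @cons x x' y hadj w ih =>
    rw [Walk.length_cons]
    rcases adj_iff.1 hadj with ⟨a, ha⟩ | ⟨a, ha⟩
    · have := lcp_concat_length x.1 y.1 a
      rw [← ha] at this
      have : x'.1.length = x.1.length + 1 := by simp [ha]
      omega
    · have := lcp_concat_length x'.1 y.1 a
      rw [← ha] at this
      have : x.1.length = x'.1.length + 1 := by simp [ha]
      omega

theorem dist_add_two_mul_length_lcp (x y : TreeBallY m ℓ) :
    (treeGraphY m ℓ).dist x y + 2 * (lcp x.1 y.1).length = x.1.length + y.1.length := by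
  obtain ⟨s, hs⟩ := lcp_prefix_left x.1 y.1
  obtain ⟨t, ht⟩ := lcp_prefix_right x.1 y.1
  let c : TreeBallY m ℓ := ⟨lcp x.1 y.1, (lcp_prefix_left _ _).length_le.trans x.2⟩
  obtain ⟨w₁, hw₁⟩ := exists_walk_of_append s c x hs.symm
  obtain ⟨w₂, hw₂⟩ := exists_walk_of_append t c y ht.symm
  obtain ⟨w, hw⟩ := (w₁.reverse.append w₂).reachable.exists_walk_length_eq_dist
  have hub := dist_le (w₁.reverse.append w₂)
  have hlb := length_add_length_le_length_walk w
  rw [Walk.length_append, Walk.length_reverse] at hub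
  have := congrArg List.length hs
  have := congrArg List.length ht
  simp only [List.length_append] at *
  omega

theorem dist_root (x : TreeBallY m ℓ) : (treeGraphY m ℓ).dist (rootY m ℓ) x = x.1.length := by
  simpa [rootY, lcp] using dist_add_two_mul_length_lcp (rootY m ℓ) x

theorem ancY_eq_length_lcp (x y : TreeBallY m ℓ) : ancY x y = (lcp x.1 y.1).length :=
  dist_root _

def parent (x : TreeBallY m ℓ) : TreeBallY m ℓ :=
  ⟨x.1.dropLast, by simpa using (Nat.sub_le _ 1).trans x.2⟩

def child (x : TreeBallY m ℓ) (hx : x.1.length < ℓ) (a : Fin m) : TreeBallY m ℓ :=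
  ⟨x.1 ++ [a], by simpa using hx⟩

@[simp]
theorem coe_child (x : TreeBallY m ℓ) (hx : x.1.length < ℓ) (a : Fin m) :
    (x.child hx a).1 = x.1 ++ [a] :=
  rfl

theorem parent_child (x : TreeBallY m ℓ) (hx : x.1.length < ℓ) (a : Fin m) :
    (x.child hx a).parent = x :=
  Subtype.ext List.dropLast_concat

theorem exists_parent_child_eq {x : TreeBallY m ℓ} (hx : x.1 ≠ []) :
    ∃ h a, x.parent.child h a = x := by
  have hlen : x.parent.1.length < ℓ := by
    have := List.length_pos_of_ne_nil hx
    have := x.2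
    simp only [parent, List.length_dropLast]
    omega
  exact ⟨hlen, x.1.getLast hx, Subtype.ext (List.dropLast_append_getLast hx)⟩

theorem exists_eq_append_iff_eq_parent {x y : TreeBallY m ℓ} :
    (∃ a, x.1 = y.1 ++ [a]) ↔ x.1 ≠ [] ∧ y = x.parent := by
  constructor
  · rintro ⟨a, ha⟩
    exact ⟨by simp [ha], Subtype.ext (by simp [parent, ha])⟩
  · rintro ⟨hx, rfl⟩
    exact ⟨x.1.getLast hx, (List.dropLast_append_getLast hx).symm⟩

theorem exists_eq_append_iff_eq_child {x y : TreeBallY m ℓ} :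
    (∃ a, y.1 = x.1 ++ [a]) ↔ ∃ h a, y = x.child h a := by
  constructor
  · rintro ⟨a, ha⟩
    have := y.2
    rw [ha, List.length_append, List.length_singleton] at this
    exact ⟨by omega, a, Subtype.ext ha⟩
  · rintro ⟨h, a, rfl⟩
    exact ⟨a, rfl⟩

theorem sum_ite_adj {M : Type*} [AddCommMonoid M] (x : TreeBallY m ℓ)
    (g : TreeBallY m ℓ → M) :
    (∑ y, if (treeGraphY m ℓ).Adj x y then g y else 0) =
      (if x.1 = [] then 0 else g x.parent) +
        if h : x.1.length < ℓ then ∑ a, g (x.child h a) else 0 := by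
  have hsplit : ∀ y, (if (treeGraphY m ℓ).Adj x y then g y else 0) =
      (if x.1 ≠ [] ∧ y = x.parent then g y else 0) +
        if ∃ h a, y = x.child h a then g y else 0 := by
    intro y
    rw [adj_iff, exists_eq_append_iff_eq_child, exists_eq_append_iff_eq_parent]
    by_cases hp : x.1 ≠ [] ∧ y = x.parent
    · have hc : ¬ ∃ h a, y = x.child h a := by
        rintro ⟨h, a, hya⟩
        have := congrArg (fun v : TreeBallY m ℓ => v.1.length) (hp.2.symm.trans hya)
        simp only [parent, child, List.length_dropLast, List.length_append,
          List.length_singleton] at this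
        omega
      rw [if_pos (Or.inr hp), if_pos hp, if_neg hc, add_zero]
    · simp [hp]
  rw [Finset.sum_congr rfl fun y _ => hsplit y, Finset.sum_add_distrib]
  congr 1
  · by_cases hx : x.1 = [] <;> simp [hx]
  · split_ifs with h
    · have hinj : Function.Injective (x.child h) := fun a b hab => by
        simpa [child] using congrArg (·.1) hab
      rw [← Finset.sum_image hinj.injOn, ← Fintype.sum_ite_mem (Finset.univ.image _)]
      refine Finset.sum_congr rfl fun y _ => ?_
      simp [h, eq_comm]
    · simp [h]

theorem dist_child_of_prefix {x y : TreeBallY m ℓ} (hx : x.1.length < ℓ) {a : Fin m}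
    (h : x.1 ++ [a] <+: y.1) :
    (treeGraphY m ℓ).dist (x.child hx a) y + 1 = (treeGraphY m ℓ).dist x y := by
  have hxa := dist_add_two_mul_length_lcp (x.child hx a) y
  have hxy := dist_add_two_mul_length_lcp x y
  rw [coe_child, lcp_concat, if_pos h] at hxa
  rw [lcp_eq_left_of_prefix ((List.prefix_append _ _).trans h)] at hxy
  simp only [List.length_append, List.length_singleton] at hxa
  omega

theorem dist_child_of_not_prefix {x y : TreeBallY m ℓ} (hx : x.1.length < ℓ) {a : Fin m}
    (h : ¬ x.1 ++ [a] <+: y.1) :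
    (treeGraphY m ℓ).dist (x.child hx a) y = (treeGraphY m ℓ).dist x y + 1 := by
  have hxa := dist_add_two_mul_length_lcp (x.child hx a) y
  have hxy := dist_add_two_mul_length_lcp x y
  rw [coe_child, lcp_concat, if_neg h] at hxa
  simp only [List.length_append, List.length_singleton] at hxa
  omega

theorem dist_parent_of_prefix {x y : TreeBallY m ℓ} (hx : x.1 ≠ []) (h : x.1 <+: y.1) :
    (treeGraphY m ℓ).dist x.parent y = (treeGraphY m ℓ).dist x y + 1 := by
  obtain ⟨hp, b, hxb⟩ := exists_parent_child_eq hx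
  rw [← hxb] at h ⊢
  rw [parent_child, ← dist_child_of_prefix hp h]

theorem dist_parent_of_not_prefix {x y : TreeBallY m ℓ} (hx : x.1 ≠ []) (h : ¬ x.1 <+: y.1) :
    (treeGraphY m ℓ).dist x.parent y + 1 = (treeGraphY m ℓ).dist x y := by
  obtain ⟨hp, b, hxb⟩ := exists_parent_child_eq hx
  rw [← hxb] at h ⊢
  rw [parent_child, dist_child_of_not_prefix hp h]

theorem sum_children_pow_dist_of_not_prefix {R : Type*} [Ring R] (u : R) {x y : TreeBallY m ℓ}
    (h : ∀ a, ¬ x.1 ++ [a] <+: y.1) :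
    (if hx : x.1.length < ℓ then
      ∑ a, (u ^ (treeGraphY m ℓ).dist (x.child hx a) y - u * u ^ (treeGraphY m ℓ).dist x y)
      else 0) = 0 := by
  split_ifs with hx
  · refine Finset.sum_eq_zero fun a _ => ?_
    rw [dist_child_of_not_prefix hx (h a), pow_succ', sub_self]
  · rfl

theorem sum_children_pow_dist_of_prefix {R : Type*} [Ring R] (u : R) {x y : TreeBallY m ℓ}
    (hx : x.1.length < ℓ) {e : Fin m} (he : x.1 ++ [e] <+: y.1) :
    ∑ a, (u ^ (treeGraphY m ℓ).dist (x.child hx a) y - u * u ^ (treeGraphY m ℓ).dist x y) =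
      u ^ (treeGraphY m ℓ).dist (x.child hx e) y
        - u ^ ((treeGraphY m ℓ).dist (x.child hx e) y + 2) := by
  have hterm : ∀ a,
      u ^ (treeGraphY m ℓ).dist (x.child hx a) y - u * u ^ (treeGraphY m ℓ).dist x y =
      if a = e then u ^ (treeGraphY m ℓ).dist (x.child hx e) y
        - u ^ ((treeGraphY m ℓ).dist (x.child hx e) y + 2) else 0 := fun a => by
    split_ifs with hae
    · rw [hae, ← dist_child_of_prefix hx he, ← pow_succ']
    · have ha : ¬ x.1 ++ [a] <+: y.1 := fun ha => hae <| by
        simpa using (List.prefix_of_prefix_length_le ha he (by simp)).eq_of_length (by simp)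
      rw [dist_child_of_not_prefix hx ha, pow_succ', sub_self]
  simp only [hterm, Finset.sum_ite_eq', Finset.mem_univ, if_true]

end TreeBallY

section Algebra

variable {d : ℕ} {z msc : ℂ}

noncomputable def sqrtBranching (d : ℕ) : ℂ := (Real.sqrt ((d : ℝ) - 1) : ℂ)

noncomputable def greenRatio (d : ℕ) (msc : ℂ) : ℂ := -(msc / sqrtBranching d)

noncomputable def kestenMcKay (d : ℕ) (z msc : ℂ) : ℂ :=
  (-z - ((d : ℂ) / ((d : ℂ) - 1)) * msc)⁻¹

theorem sqrtBranching_sq (hd : 1 ≤ d) : sqrtBranching d ^ 2 = d - 1 := by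
  rw [sqrtBranching, ← Complex.ofReal_pow, Real.sq_sqrt (by simpa using hd)]
  push_cast
  ring

theorem sqrtBranching_ne_zero (hd : 2 ≤ d) : sqrtBranching d ≠ 0 := by
  intro h
  have := sqrtBranching_sq (d := d) (by omega)
  rw [h, zero_pow two_ne_zero, eq_comm, sub_eq_zero] at this
  exact absurd (by exact_mod_cast this) (show d ≠ 1 by omega)

theorem sqrtBranching_mul_greenRatio (hd : 2 ≤ d) :
    sqrtBranching d * greenRatio d msc = -msc := by
  rw [greenRatio, mul_neg, mul_div_cancel₀ _ (sqrtBranching_ne_zero hd)]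

theorem add_mul_greenRatio (hd : 2 ≤ d) (hmsc : msc ^ 2 + z * msc + 1 = 0) :
    (z + msc) * greenRatio d msc = (sqrtBranching d)⁻¹ := by
  have hs := sqrtBranching_ne_zero hd
  rw [greenRatio]
  field_simp
  linear_combination (-1) * hmsc

theorem kestenMcKay_inv (hd : 2 ≤ d) :
    (kestenMcKay d z msc)⁻¹ = (sqrtBranching d)⁻¹ * greenRatio d msc - (z + msc) := by
  have hs := sqrtBranching_ne_zero hd
  have hs2 := sqrtBranching_sq (d := d) (by omega)
  have hd1 : (d : ℂ) - 1 ≠ 0 := by rw [← hs2]; exact pow_ne_zero 2 hs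
  rw [kestenMcKay, inv_inv, greenRatio]
  field_simp
  linear_combination (-msc) * hs2

theorem kestenMcKay_mul_inv (hd : 2 ≤ d) (hz : 0 < z.im) (him : 0 < msc.im) :
    kestenMcKay d z msc * (kestenMcKay d z msc)⁻¹ = 1 := by
  have hratio : (d : ℂ) / ((d : ℂ) - 1) = (((d : ℝ) / ((d : ℝ) - 1) : ℝ) : ℂ) := by
    push_cast; rfl
  have hpos : 0 < (d : ℝ) / ((d : ℝ) - 1) := by
    have : (2 : ℝ) ≤ d := by exact_mod_cast hd
    exact div_pos (by linarith) (by linarith)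
  have him_neg : (-z - ((d : ℂ) / ((d : ℂ) - 1)) * msc).im < 0 := by
    rw [hratio, Complex.sub_im, Complex.neg_im, Complex.im_ofReal_mul]
    nlinarith [mul_pos hpos him]
  rw [kestenMcKay, inv_inv]
  exact inv_mul_cancel₀ fun h => by simp [h] at him_neg

theorem kestenMcKay_mul_one_sub_sq (hd : 2 ≤ d) (hz : 0 < z.im) (him : 0 < msc.im)
    (hmsc : msc ^ 2 + z * msc + 1 = 0) :
    kestenMcKay d z msc * (1 - greenRatio d msc ^ 2) = msc := by
  have hsu := sqrtBranching_mul_greenRatio (msc := msc) hd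
  have hss := mul_inv_cancel₀ (sqrtBranching_ne_zero hd)
  have hmc : msc * (kestenMcKay d z msc)⁻¹ = 1 - greenRatio d msc ^ 2 := by
    rw [kestenMcKay_inv hd]
    linear_combination ((sqrtBranching d)⁻¹ * greenRatio d msc) * hsu - hmsc
      - greenRatio d msc ^ 2 * hss
  rw [← hmc, mul_left_comm, kestenMcKay_mul_inv hd hz him, mul_one]

end Algebra

section GreenFunction

open Matrix TreeBallY

variable {d ℓ : ℕ} {z msc : ℂ}

theorem shiftedHmat_mulVec_apply (hd : 2 ≤ d) (g : TreeBallY (d - 1) ℓ → ℂ)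
    (i : TreeBallY (d - 1) ℓ) :
    ((HmatY d ℓ - z • 1 - msc • IbdY d ℓ) *ᵥ g) i =
      (sqrtBranching d)⁻¹ * ((if i.1 = [] then 0 else g i.parent) +
        if h : i.1.length < ℓ then ∑ a, (g (i.child h a) - greenRatio d msc * g i) else 0)
      - (z + msc) * g i := by
  have hH : (HmatY d ℓ *ᵥ g) i =
      (sqrtBranching d)⁻¹ * ∑ k, if (treeGraphY (d - 1) ℓ).Adj i k then g k else 0 := by
    simp only [mulVec, dotProduct, HmatY, Finset.mul_sum, ite_mul, zero_mul, mul_ite, mul_zero]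
    rfl
  have hI : (IbdY d ℓ *ᵥ g) i = if i.1.length = ℓ then g i else 0 := by
    simp [IbdY, mulVec_diagonal, dist_root]
  rw [sub_mulVec, sub_mulVec, smul_mulVec, smul_mulVec, one_mulVec, Pi.sub_apply, Pi.sub_apply,
    Pi.smul_apply, Pi.smul_apply, hH, hI, sum_ite_adj, smul_eq_mul, smul_eq_mul]
  have hsu := sqrtBranching_mul_greenRatio (msc := msc) hd
  have hss := mul_inv_cancel₀ (sqrtBranching_ne_zero hd)
  have hs2 := sqrtBranching_sq (d := d) (by omega)
  rcases i.2.lt_or_eq with h | h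
  · simp only [dif_pos h, if_neg h.ne]
    rw [Finset.sum_sub_distrib, Finset.sum_const, Finset.card_univ,
      Fintype.card_fin, nsmul_eq_mul, Nat.cast_sub (by omega : 1 ≤ d), Nat.cast_one]
    linear_combination (-((sqrtBranching d)⁻¹ * greenRatio d msc * g i)) * hs2
      + (sqrtBranching d * greenRatio d msc * g i) * hss + g i * hsu
  · simp only [dif_neg h.not_lt, if_pos h]
    ring

theorem shiftedHmat_mulVec_pow_length (hd : 2 ≤ d) (hmsc : msc ^ 2 + z * msc + 1 = 0)
    (i : TreeBallY (d - 1) ℓ) :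
    ((HmatY d ℓ - z • 1 - msc • IbdY d ℓ) *ᵥ
        fun x => greenRatio d msc ^ (x.1.length + 1)) i =
      if i.1 = [] then -(sqrtBranching d)⁻¹ else 0 := by
  have hu := add_mul_greenRatio hd hmsc
  have hchild : ∀ h a, greenRatio d msc ^ ((i.child h a).1.length + 1)
      - greenRatio d msc * greenRatio d msc ^ (i.1.length + 1) = 0 := fun h a => by
    rw [coe_child, List.length_append, List.length_singleton, pow_succ' _ (i.1.length + 1),
      sub_self]
  simp only [shiftedHmat_mulVec_apply hd, hchild, Finset.sum_const_zero, dite_eq_ite, ite_self,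
    add_zero]
  split_ifs with hi
  · rw [hi, List.length_nil]
    linear_combination -hu
  · have hlen : i.parent.1.length + 1 = i.1.length := by
      simp only [parent, List.length_dropLast]
      have := List.length_pos_of_ne_nil hi
      omega
    rw [← hlen]
    linear_combination (-greenRatio d msc ^ (i.parent.1.length + 1)) * hu

theorem shiftedHmat_mulVec_pow_dist (hd : 2 ≤ d) (hmsc : msc ^ 2 + z * msc + 1 = 0)
    (i j : TreeBallY (d - 1) ℓ) :
    ((HmatY d ℓ - z • 1 - msc • IbdY d ℓ) *ᵥ
        fun x => greenRatio d msc ^ (treeGraphY (d - 1) ℓ).dist x j) i =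
      (if i = j then (kestenMcKay d z msc)⁻¹ else 0) -
        if i.1 = [] then (sqrtBranching d)⁻¹ * greenRatio d msc ^ (j.1.length + 1) else 0 := by
  have hu := add_mul_greenRatio hd hmsc
  rw [shiftedHmat_mulVec_apply hd, kestenMcKay_inv hd]
  by_cases hij : i = j
  · subst hij
    rw [sum_children_pow_dist_of_not_prefix _ fun a h => by simpa using h.length_le,
      dist_self, if_pos rfl]
    split_ifs with hi
    · rw [hi, List.length_nil]
      ring
    · rw [dist_parent_of_prefix hi List.prefix_rfl, dist_self]
      ring
  by_cases hpre : i.1 <+: j.1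
  · obtain ⟨_ | ⟨e, t⟩, ht⟩ := hpre
    · exact absurd (Subtype.ext (by simpa using ht)) hij
    have he : i.1 ++ [e] <+: j.1 := ⟨t, by simp [← ht]⟩
    have hlt : i.1.length < ℓ := by
      have := he.length_le.trans j.2
      simpa using this
    rw [dif_pos hlt, sum_children_pow_dist_of_prefix _ hlt he, if_neg hij,
      ← dist_child_of_prefix hlt he]
    split_ifs with hi
    · rw [← dist_root j, show rootY (d - 1) ℓ = i from Subtype.ext hi.symm,
        ← dist_child_of_prefix hlt he]
      linear_combination (-greenRatio d msc ^ (treeGraphY (d - 1) ℓ).dist (i.child hlt e) j) * hu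
    · rw [dist_parent_of_prefix hi (ht ▸ List.prefix_append _ _),
        ← dist_child_of_prefix hlt he]
      linear_combination (-greenRatio d msc ^ (treeGraphY (d - 1) ℓ).dist (i.child hlt e) j) * hu
  · have hi : i.1 ≠ [] := fun hi => hpre (hi ▸ List.nil_prefix)
    rw [sum_children_pow_dist_of_not_prefix _ fun a h => hpre ((List.prefix_append _ _).trans h),
      if_neg hi, if_neg hij, if_neg hi, ← dist_parent_of_not_prefix hi hpre]
    linear_combination (-greenRatio d msc ^ (treeGraphY (d - 1) ℓ).dist i.parent j) * hu

noncomputable def greenY (d ℓ : ℕ) (z msc : ℂ) :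
    Matrix (TreeBallY (d - 1) ℓ) (TreeBallY (d - 1) ℓ) ℂ :=
  Matrix.of fun x y => kestenMcKay d z msc * (greenRatio d msc ^ (treeGraphY (d - 1) ℓ).dist x y
    - greenRatio d msc ^ (x.1.length + 1) * greenRatio d msc ^ (y.1.length + 1))

theorem shiftedHmat_mul_greenY (hd : 2 ≤ d) (hz : 0 < z.im) (him : 0 < msc.im)
    (hmsc : msc ^ 2 + z * msc + 1 = 0) :
    (HmatY d ℓ - z • 1 - msc • IbdY d ℓ) * greenY d ℓ z msc = 1 := by
  ext i j
  have hcol : (fun x => greenY d ℓ z msc x j) = kestenMcKay d z msc •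
      ((fun x => greenRatio d msc ^ (treeGraphY (d - 1) ℓ).dist x j) -
        greenRatio d msc ^ (j.1.length + 1) • fun x => greenRatio d msc ^ (x.1.length + 1)) := by
    ext x
    simp [greenY, mul_comm]
  have hmd := kestenMcKay_mul_inv hd hz him
  change ((HmatY d ℓ - z • 1 - msc • IbdY d ℓ) *ᵥ fun x => greenY d ℓ z msc x j) i = _
  rw [hcol, mulVec_smul, mulVec_sub, mulVec_smul, Pi.smul_apply, Pi.sub_apply, Pi.smul_apply,
    shiftedHmat_mulVec_pow_dist hd hmsc, shiftedHmat_mulVec_pow_length hd hmsc, one_apply,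
    smul_eq_mul, smul_eq_mul]
  split_ifs
  · linear_combination hmd
  · linear_combination hmd
  · ring
  · ring

theorem greenY_apply (i j : TreeBallY (d - 1) ℓ) :
    greenY d ℓ z msc i j = kestenMcKay d z msc * (1 - greenRatio d msc ^ (2 * ancY i j + 2)) *
      greenRatio d msc ^ (treeGraphY (d - 1) ℓ).dist i j := by
  have h := dist_add_two_mul_length_lcp i j
  rw [greenY, of_apply, ancY_eq_length_lcp, ← pow_add, show i.1.length + 1 + (j.1.length + 1) =
    2 * (lcp i.1 j.1).length + 2 + (treeGraphY (d - 1) ℓ).dist i j by omega, pow_add]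
  ring

theorem greenY_root_apply (hd : 2 ≤ d) (hz : 0 < z.im) (him : 0 < msc.im)
    (hmsc : msc ^ 2 + z * msc + 1 = 0) (i : TreeBallY (d - 1) ℓ) :
    greenY d ℓ z msc (rootY (d - 1) ℓ) i =
      msc * greenRatio d msc ^ (treeGraphY (d - 1) ℓ).dist (rootY (d - 1) ℓ) i := by
  have hanc : ancY (rootY (d - 1) ℓ) i = 0 := by rw [ancY_eq_length_lcp]; rfl
  rw [greenY_apply, hanc, mul_zero, zero_add, kestenMcKay_mul_one_sub_sq hd hz him hmsc]

end GreenFunction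

theorem green_function_ary_tree_ball_general (d ℓ : ℕ) (hd : 3 ≤ d)
    (z msc : ℂ) (hz : 0 < z.im)
    (hmsc : msc ^ 2 + z * msc + 1 = 0) (him : 0 < msc.im) :
    IsUnit (HmatY d ℓ - z • (1 : Matrix (TreeBallY (d - 1) ℓ) (TreeBallY (d - 1) ℓ) ℂ)
        - msc • IbdY d ℓ) ∧
    (∀ i j : TreeBallY (d - 1) ℓ,
      ((HmatY d ℓ - z • 1 - msc • IbdY d ℓ)⁻¹) i j =
        (-z - ((d : ℂ) / ((d : ℂ) - 1)) * msc)⁻¹ *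
          (1 - (-(msc / (Real.sqrt ((d : ℝ) - 1) : ℂ))) ^ (2 * ancY i j + 2)) *
          (-(msc / (Real.sqrt ((d : ℝ) - 1) : ℂ))) ^ ((treeGraphY (d - 1) ℓ).dist i j)) ∧
    (∀ i : TreeBallY (d - 1) ℓ,
      ((HmatY d ℓ - z • 1 - msc • IbdY d ℓ)⁻¹) (rootY (d - 1) ℓ) i =
        msc * (-(msc / (Real.sqrt ((d : ℝ) - 1) : ℂ))) ^
          ((treeGraphY (d - 1) ℓ).dist (rootY (d - 1) ℓ) i)) := by
  have hd' : 2 ≤ d := by omega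
  have hMG := shiftedHmat_mul_greenY (ℓ := ℓ) hd' hz him hmsc
  rw [Matrix.inv_eq_right_inv hMG]
  exact ⟨(Matrix.isUnit_iff_isUnit_det _).2 (Matrix.isUnit_det_of_right_inverse hMG),
    greenY_apply, greenY_root_apply hd' hz him hmsc⟩

/-- **Green's function of the `(d-1)`-ary tree ball.** Fix `d ≥ 3`, `ℓ ≥ 1`, and `z ∈ ℂ` with
`Im z > 0`; let `m_sc(z)` be the unique root of `m² + z m + 1 = 0` with positive imaginary part
and `m_d(z) = 1/(-z - (d/(d-1)) m_sc(z))`. Then `H_{𝒴_ℓ} - z·I - m_sc(z)·𝕀∂` is invertible,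
its inverse `P` satisfies
`P_{ij} = m_d(z) · (1 - (-m_sc(z)/√(d-1))^{2 anc(i,j)+2}) · (-m_sc(z)/√(d-1))^{dist(i,j)}`,
and in particular `P_{oi} = m_sc(z) · (-m_sc(z)/√(d-1))^{dist(o,i)}`. -/
theorem green_function_ary_tree_ball (d ℓ : ℕ) (hd : 3 ≤ d) (hℓ : 1 ≤ ℓ)
    (z msc : ℂ) (hz : 0 < z.im)
    (hmsc : msc ^ 2 + z * msc + 1 = 0) (him : 0 < msc.im) :
    IsUnit (HmatY d ℓ - z • (1 : Matrix (TreeBallY (d - 1) ℓ) (TreeBallY (d - 1) ℓ) ℂ)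
        - msc • IbdY d ℓ) ∧
    (∀ i j : TreeBallY (d - 1) ℓ,
      ((HmatY d ℓ - z • 1 - msc • IbdY d ℓ)⁻¹) i j =
        (-z - ((d : ℂ) / ((d : ℂ) - 1)) * msc)⁻¹ *
          (1 - (-(msc / (Real.sqrt ((d : ℝ) - 1) : ℂ))) ^ (2 * ancY i j + 2)) *
          (-(msc / (Real.sqrt ((d : ℝ) - 1) : ℂ))) ^ ((treeGraphY (d - 1) ℓ).dist i j)) ∧
    (∀ i : TreeBallY (d - 1) ℓ,
      ((HmatY d ℓ - z • 1 - msc • IbdY d ℓ)⁻¹) (rootY (d - 1) ℓ) i =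
        msc * (-(msc / (Real.sqrt ((d : ℝ) - 1) : ℂ))) ^
          ((treeGraphY (d - 1) ℓ).dist (rootY (d - 1) ℓ) i)) :=
  green_function_ary_tree_ball_general d ℓ hd z msc hz hmsc him
end

section
/- Fix an integer d ≥ 3. There exist constants c, C > 0 depending only on d such that for all integers ℓ ≥ 1, all z ∈ ℂ with Im z > 0, and all Δ ∈ ℂ with Im Δ > 0 satisfying ℓ²·|Δ − m_sc(z)| ≤ c, one has | Y_ℓ(Δ,z) − m_sc(z) − m_sc(z)^{2ℓ+2}·(Δ − m_sc(z)) − m_sc(z)^{2ℓ+2}·m_d(z)·( (1 − m_sc(z)^{2ℓ+2})/(d−1) + ((d−2)/(d−1))·(1 − m_sc(z)^{2ℓ+2})/(1 − m_sc(z)²) )·(Δ − m_sc(z))² | ≤ C·ℓ⁵·|Δ − m_sc(z)|³, where Y_ℓ(Δ,z) := ((H_{𝒴_ℓ} − z·I − Δ·𝕀∂)⁻¹)_{oo}. -/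
open scoped Classical

/-!
All vertices of `𝒴_ℓ` at the same depth carry isomorphic subtrees, so the root column of the
resolvent is radial and the Schur complement formula collapses to the scalar recursion
`G ↦ -(z + G)⁻¹` started from `Δ` at the leaves: `Y_ℓ(Δ, z)` is its `(ℓ + 1)`-st iterate.
This Möbius map fixes `m = m_sc(z)`, and around the fixed point its iterates are explicit: with
`u = Δ - m` and `S_n = ∑_{i<n} m^{2i}`, the `n`-th iterate is `m + m^{2n} u / (1 - m S_n u)`.
Since `|m| < 1`, `|m S_n u| ≤ n |u|`; expanding `1 / (1 - m S_n u)` to first order gives the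
quadratic term `m^{2n} m S_n u²` (which is the `m_d` expression of the statement) with an error
at most `2 n² |u|³`.
-/

open Finset Matrix

section TreeBall

variable {m ℓ : ℕ}

theorem treeGraphY_adj_iff {x y : TreeBallY m ℓ} :
    (treeGraphY m ℓ).Adj x y ↔
      (∃ a : Fin m, y.1 = x.1 ++ [a]) ∨ (∃ a : Fin m, x.1 = y.1 ++ [a]) := by
  rw [treeGraphY, SimpleGraph.fromRel_adj, and_iff_right_iff_imp]
  rintro (⟨a, ha⟩ | ⟨a, ha⟩) rfl <;> simpa using congrArg List.length ha

theorem length_le_length_add_of_walk {x y : TreeBallY m ℓ} (p : (treeGraphY m ℓ).Walk x y) :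
    y.1.length ≤ x.1.length + p.length := by
  induction p with
  | nil => simp
  | cons h _ ih =>
    rw [SimpleGraph.Walk.length_cons]
    rcases treeGraphY_adj_iff.mp h with ⟨a, ha⟩ | ⟨a, ha⟩ <;>
      · have := congrArg List.length ha
        simp only [List.length_append, List.length_singleton] at this
        omega

theorem exists_walk_from_rootY (l : List (Fin m)) (hl : l.length ≤ ℓ) :
    ∃ p : (treeGraphY m ℓ).Walk (rootY m ℓ) ⟨l, hl⟩, p.length = l.length := by
  induction l using List.reverseRecOn with
  | nil => exact ⟨.nil, rfl⟩
  | append_singleton s a ih =>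
    have hs : s.length ≤ ℓ := by simp at hl; omega
    obtain ⟨p, hp⟩ := ih hs
    have hadj : (treeGraphY m ℓ).Adj ⟨s, hs⟩ ⟨s ++ [a], hl⟩ :=
      treeGraphY_adj_iff.mpr (.inl ⟨a, rfl⟩)
    exact ⟨p.concat hadj, (p.length_concat hadj).trans (by simp [hp])⟩

theorem treeGraphY_dist_rootY (x : TreeBallY m ℓ) :
    (treeGraphY m ℓ).dist (rootY m ℓ) x = x.1.length := by
  obtain ⟨p, hp⟩ := exists_walk_from_rootY x.1 x.2
  refine le_antisymm (hp ▸ SimpleGraph.dist_le p) ?_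
  obtain ⟨q, hq⟩ := p.reachable.exists_walk_length_eq_dist
  refine (length_le_length_add_of_walk q).trans_eq ?_
  change 0 + q.length = _
  rw [hq, zero_add]
  rfl

theorem TreeBallY.card_children (x : TreeBallY m ℓ) :
    #{y : TreeBallY m ℓ | ∃ a : Fin m, y.1 = x.1 ++ [a]} = if x.1.length < ℓ then m else 0 := by
  split_ifs with h
  · let child (a : Fin m) : TreeBallY m ℓ := ⟨x.1 ++ [a], by simpa using h⟩
    have hchild : Function.Injective child := fun a b hab => by
      simpa [child] using congrArg Subtype.val hab
    convert (card_image_of_injective univ hchild).trans (card_fin m)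
    ext y
    simp only [mem_filter, mem_univ, true_and, mem_image]
    exact ⟨fun ⟨a, ha⟩ => ⟨a, Subtype.ext ha.symm⟩, fun ⟨a, ha⟩ => ⟨a, ha ▸ rfl⟩⟩
  · rw [card_eq_zero, filter_eq_empty_iff]
    rintro y - ⟨a, ha⟩
    have := congrArg List.length ha
    simp only [List.length_append, List.length_singleton] at this
    exact h (by have := y.2; omega)

theorem TreeBallY.card_parent (x : TreeBallY m ℓ) :
    #{y : TreeBallY m ℓ | ∃ a : Fin m, x.1 = y.1 ++ [a]} = if 0 < x.1.length then 1 else 0 := by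
  split_ifs with h
  · have hx : x.1 ≠ [] := List.ne_nil_of_length_pos h
    let parent : TreeBallY m ℓ := ⟨x.1.dropLast, by
      rw [List.length_dropLast]; have := x.2; omega⟩
    rw [card_eq_one]
    refine ⟨parent, ?_⟩
    ext y
    simp only [mem_filter, mem_univ, true_and, mem_singleton]
    constructor
    · rintro ⟨a, ha⟩
      exact Subtype.ext (by simp [parent, ha])
    · rintro rfl
      exact ⟨x.1.getLast hx, (List.dropLast_append_getLast hx).symm⟩
  · rw [card_eq_zero, filter_eq_empty_iff]
    rintro y - ⟨a, ha⟩
    simp [ha] at h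

theorem treeGraphY_sum_neighbor_radial (g : ℕ → ℂ) (x : TreeBallY m ℓ) :
    ∑ y ∈ (treeGraphY m ℓ).neighborFinset x, g y.1.length =
      (if x.1.length < ℓ then (m : ℂ) else 0) * g (x.1.length + 1) +
        (if 0 < x.1.length then 1 else 0) * g (x.1.length - 1) := by
  have hdisj : Disjoint (({y | ∃ a : Fin m, y.1 = x.1 ++ [a]} : Finset (TreeBallY m ℓ)))
      ({y | ∃ a : Fin m, x.1 = y.1 ++ [a]} : Finset (TreeBallY m ℓ)) := by
    rw [disjoint_filter]
    rintro y - ⟨a, ha⟩ ⟨b, hb⟩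
    have h1 := congrArg List.length ha
    have h2 := congrArg List.length hb
    simp only [List.length_append, List.length_singleton] at h1 h2
    omega
  have hchild : ∀ y ∈ ({y | ∃ a : Fin m, y.1 = x.1 ++ [a]} : Finset (TreeBallY m ℓ)),
      g y.1.length = g (x.1.length + 1) := fun y hy => by
    obtain ⟨a, ha⟩ := (mem_filter.mp hy).2
    simp [ha]
  have hparent : ∀ y ∈ ({y | ∃ a : Fin m, x.1 = y.1 ++ [a]} : Finset (TreeBallY m ℓ)),
      g y.1.length = g (x.1.length - 1) := fun y hy => by
    obtain ⟨a, ha⟩ := (mem_filter.mp hy).2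
    simp [ha]
  rw [SimpleGraph.neighborFinset_eq_filter]
  simp_rw [treeGraphY_adj_iff]
  rw [filter_or, sum_union hdisj, sum_congr rfl hchild, sum_congr rfl hparent, sum_const,
    sum_const, TreeBallY.card_children, TreeBallY.card_parent]
  split_ifs <;> simp

end TreeBall

open scoped ComplexOrder in
theorem Matrix.det_sub_smul_one_sub_smul_ne_zero {n : Type*} [Fintype n] [DecidableEq n]
    {H B : Matrix n n ℂ} (hH : H.IsHermitian) (hB : B.PosSemidef) {z Δ : ℂ} (hz : 0 < z.im)
    (hΔ : 0 ≤ Δ.im) : (H - z • 1 - Δ • B).det ≠ 0 := by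
  intro hdet
  obtain ⟨u, hu, hMu⟩ := exists_mulVec_eq_zero_iff.mpr hdet
  have hquad : star u ⬝ᵥ H *ᵥ u - z * (star u ⬝ᵥ u) - Δ * (star u ⬝ᵥ B *ᵥ u) = 0 := by
    rw [← dotProduct_zero (star u), ← hMu]
    simp only [sub_mulVec, smul_mulVec, one_mulVec, dotProduct_sub,
      dotProduct_smul, smul_eq_mul]
  have hH0 : (star u ⬝ᵥ H *ᵥ u).im = 0 := hH.im_star_dotProduct_mulVec_self u
  obtain ⟨hU, hU0⟩ := Complex.pos_iff.mp (dotProduct_star_self_pos_iff.mpr hu)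
  obtain ⟨hV, hV0⟩ := Complex.nonneg_iff.mp (hB.dotProduct_mulVec_nonneg u)
  have him := congrArg Complex.im hquad
  simp only [Complex.sub_im, Complex.mul_im, hH0, ← hU0, ← hV0, Complex.zero_im] at him
  nlinarith [mul_pos hz hU, mul_nonneg hΔ hV]

theorem Matrix.inv_apply_of_mulVec_eq_single {n : Type*} [Fintype n] [DecidableEq n]
    {A : Matrix n n ℂ} (hA : IsUnit A.det) {v : n → ℂ} {j : n} (hv : A *ᵥ v = Pi.single j 1)
    (i : n) : A⁻¹ i j = v i := by
  have := congrArg (A⁻¹ *ᵥ ·) hv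
  simp only [mulVec_mulVec, nonsing_inv_mul _ hA, one_mulVec,
    mulVec_single_one] at this
  exact (congrFun this i).symm

/-- One step of the Schur-complement recursion on the tree: a vertex whose `d - 1` children
(coupled with weight `1/√(d-1)`) have resolvent entry `G` has resolvent entry `-(z + G)⁻¹`. -/
noncomputable def resolventStep (z G : ℂ) : ℂ := -(z + G)⁻¹

section ResolventStep

variable {z Δ : ℂ}

theorem im_resolventStep_pos {G : ℂ} (hz : 0 < z.im) (hG : 0 ≤ G.im) :
    0 < (resolventStep z G).im := by
  have him : 0 < (z + G).im := by rw [Complex.add_im]; linarith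
  have hne : z + G ≠ 0 := fun h => by simp [h] at him
  rw [resolventStep, Complex.neg_im, Complex.inv_im, neg_div, neg_neg]
  exact div_pos him (Complex.normSq_pos.mpr hne)

theorem im_resolventStep_iterate_nonneg (hz : 0 < z.im) (hΔ : 0 ≤ Δ.im) :
    ∀ k, 0 ≤ ((resolventStep z)^[k] Δ).im
  | 0 => hΔ
  | k + 1 => by
    rw [Function.iterate_succ_apply']
    exact (im_resolventStep_pos hz (im_resolventStep_iterate_nonneg hz hΔ k)).le

theorem add_resolventStep_iterate_ne_zero (hz : 0 < z.im) (hΔ : 0 ≤ Δ.im) (k : ℕ) :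
    z + (resolventStep z)^[k] Δ ≠ 0 := fun h => by
  have := congrArg Complex.im h
  rw [Complex.add_im, Complex.zero_im] at this
  linarith [im_resolventStep_iterate_nonneg hz hΔ k]

/-- The entries `(x, o)` of the resolvent of `𝒴_ℓ`, as a function of the depth `k` of `x`:
the root entry times the factors `-a G` of the subtrees met along the path from `o` to `x`. -/
noncomputable def rootColumn (a : ℂ) (ℓ : ℕ) (z Δ : ℂ) : ℕ → ℂ
  | 0 => (resolventStep z)^[ℓ + 1] Δ
  | k + 1 => -a * (resolventStep z)^[ℓ - k] Δ * rootColumn a ℓ z Δ k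

/-- The resolvent equation at a vertex of depth `k`, with `b` children per vertex. -/
theorem rootColumn_radial_eq {a b : ℂ} {ℓ k : ℕ} (hab : b * a ^ 2 = 1) (hℓ : 1 ≤ ℓ) (hk : k ≤ ℓ)
    (hz : 0 < z.im) (hΔ : 0 ≤ Δ.im) :
    a * ((if k < ℓ then b else 0) * rootColumn a ℓ z Δ (k + 1) +
        (if 0 < k then 1 else 0) * rootColumn a ℓ z Δ (k - 1)) -
      z * rootColumn a ℓ z Δ k - (if k = ℓ then Δ else 0) * rootColumn a ℓ z Δ k =
      if k = 0 then 1 else 0 := by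
  set P := rootColumn a ℓ z Δ
  set g : ℕ → ℂ := fun j => (resolventStep z)^[ℓ + 1 - j] Δ
  have hg : ∀ j ≤ ℓ, (z + g (j + 1)) * g j = -1 := fun j hj => by
    have hne := add_resolventStep_iterate_ne_zero hz hΔ (ℓ + 1 - (j + 1))
    simp only [g, show ℓ + 1 - j = ℓ + 1 - (j + 1) + 1 by omega, Function.iterate_succ_apply',
      resolventStep]
    field_simp
  have hP : ∀ j, P (j + 1) = -a * g (j + 1) * P j := fun j => by
    simp only [P, g, rootColumn, show ℓ - j = ℓ + 1 - (j + 1) by omega]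
  have hP0 : P 0 = g 0 := rfl
  have hΔg : Δ = g (ℓ + 1) := by simp [g]
  have hbal : ∀ j, j + 1 ≤ ℓ → a * P j = (z + g (j + 2)) * P (j + 1) := fun j hj => by
    rw [hP j]
    linear_combination (a * P j) * hg (j + 1) hj
  rcases k with _ | j
  · rw [if_pos (by omega : 0 < ℓ), if_neg (by omega : 0 ≠ ℓ), if_neg (lt_irrefl 0), if_pos rfl,
      hP 0, hP0]
    linear_combination (-g (0 + 1) * g 0) * hab - hg 0 (by omega)
  · simp only [if_pos (Nat.succ_pos j), if_neg (Nat.succ_ne_zero j), Nat.add_sub_cancel]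
    rcases lt_or_eq_of_le hk with hlt | heq
    · simp only [if_pos hlt, if_neg hlt.ne]
      rw [hP (j + 1)]
      linear_combination (-(g (j + 2)) * P (j + 1)) * hab + hbal j (by omega)
    · simp only [if_neg heq.not_lt, if_pos heq]
      rw [hΔg, ← heq]
      linear_combination hbal j (by omega)

end ResolventStep

section ResolventY

variable {d ℓ : ℕ} {z Δ : ℂ}

theorem HmatY_eq_smul_adjMatrix (d ℓ : ℕ) :
    HmatY d ℓ = ((√((d : ℝ) - 1) : ℂ)⁻¹) • (treeGraphY (d - 1) ℓ).adjMatrix ℂ := by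
  ext x y
  simp [HmatY, SimpleGraph.adjMatrix_apply]

theorem isHermitian_HmatY (d ℓ : ℕ) : (HmatY d ℓ).IsHermitian := by
  ext x y
  simp [HmatY, SimpleGraph.adj_comm, apply_ite (starRingEnd ℂ)]

theorem IbdY_eq_diagonal (d ℓ : ℕ) :
    IbdY d ℓ = diagonal fun x => if x.1.length = ℓ then 1 else 0 := by
  simp [IbdY, treeGraphY_dist_rootY]

open scoped ComplexOrder in
theorem posSemidef_IbdY (d ℓ : ℕ) : (IbdY d ℓ).PosSemidef := by
  rw [IbdY_eq_diagonal]
  exact .diagonal fun x => by dsimp only; split_ifs <;> norm_num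

theorem HmatY_sub_mulVec_radial (g : ℕ → ℂ) (x : TreeBallY (d - 1) ℓ) :
    ((HmatY d ℓ - z • 1 - Δ • IbdY d ℓ) *ᵥ fun y => g y.1.length) x =
      (√((d : ℝ) - 1) : ℂ)⁻¹ *
          ((if x.1.length < ℓ then ((d - 1 : ℕ) : ℂ) else 0) * g (x.1.length + 1) +
            (if 0 < x.1.length then 1 else 0) * g (x.1.length - 1)) -
        z * g x.1.length - (if x.1.length = ℓ then Δ else 0) * g x.1.length := by
  simp only [sub_mulVec, smul_mulVec, one_mulVec, HmatY_eq_smul_adjMatrix, IbdY_eq_diagonal,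
    mulVec_diagonal, Pi.sub_apply, Pi.smul_apply, SimpleGraph.adjMatrix_mulVec_apply,
    treeGraphY_sum_neighbor_radial, smul_eq_mul]
  split_ifs <;> ring

theorem HmatY_sub_mulVec_rootColumn (hd : 2 ≤ d) (hℓ : 1 ≤ ℓ) (hz : 0 < z.im) (hΔ : 0 ≤ Δ.im) :
    (HmatY d ℓ - z • 1 - Δ • IbdY d ℓ) *ᵥ
        (fun x => rootColumn (√((d : ℝ) - 1) : ℂ)⁻¹ ℓ z Δ x.1.length) =
      Pi.single (rootY (d - 1) ℓ) 1 := by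
  have hab : ((d - 1 : ℕ) : ℂ) * ((√((d : ℝ) - 1) : ℂ)⁻¹) ^ 2 = 1 := by
    have hd1 : (1 : ℝ) ≤ d := by exact_mod_cast (by omega : 1 ≤ d)
    rw [inv_pow, ← Complex.ofReal_pow, Real.sq_sqrt (by linarith), Nat.cast_sub (by omega)]
    push_cast
    exact mul_inv_cancel₀ (sub_ne_zero.mpr (by exact_mod_cast (by omega : d ≠ 1)))
  funext x
  rw [HmatY_sub_mulVec_radial, rootColumn_radial_eq hab hℓ x.2 hz hΔ, Pi.single_apply]
  congr 1
  rw [List.length_eq_zero_iff]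
  exact propext ⟨fun h => Subtype.ext h, fun h => h ▸ rfl⟩

theorem inv_HmatY_sub_apply_rootY (hd : 2 ≤ d) (hℓ : 1 ≤ ℓ) (hz : 0 < z.im) (hΔ : 0 ≤ Δ.im) :
    (HmatY d ℓ - z • 1 - Δ • IbdY d ℓ)⁻¹ (rootY (d - 1) ℓ) (rootY (d - 1) ℓ) =
      (resolventStep z)^[ℓ + 1] Δ :=
  Matrix.inv_apply_of_mulVec_eq_single
    (isUnit_iff_ne_zero.mpr <| Matrix.det_sub_smul_one_sub_smul_ne_zero (isHermitian_HmatY d ℓ)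
      (posSemidef_IbdY d ℓ) hz hΔ)
    (HmatY_sub_mulVec_rootColumn hd hℓ hz hΔ) _

end ResolventY

section FixedPoint

variable {z m : ℂ}

theorem norm_lt_one_of_sq_add_mul_add_one_eq_zero (hz : 0 < z.im) (hm : 0 < m.im)
    (hroot : m ^ 2 + z * m + 1 = 0) : ‖m‖ < 1 := by
  have hm0 : m ≠ 0 := by rintro rfl; simp at hroot
  have hN : 0 < Complex.normSq m := Complex.normSq_pos.mpr hm0
  have hzm : z = -m - m⁻¹ := by field_simp; linear_combination hroot
  rw [hzm, Complex.sub_im, Complex.neg_im, Complex.inv_im, neg_div] at hz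
  have h : m.im < m.im / Complex.normSq m := by linarith
  rw [lt_div_iff₀ hN] at h
  rw [← sq_lt_one_iff₀ (norm_nonneg m), ← Complex.normSq_eq_norm_sq]
  nlinarith

theorem resolventStep_add_of_root (hroot : m ^ 2 + z * m + 1 = 0) {w : ℂ} (hw : 1 - m * w ≠ 0) :
    resolventStep z (m + w) = m + m ^ 2 * w / (1 - m * w) := by
  have hm0 : m ≠ 0 := by rintro rfl; simp at hroot
  have hzmw : z + (m + w) = -(1 - m * w) / m := by field_simp; linear_combination hroot
  rw [resolventStep, hzmw]
  field_simp
  ring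

theorem resolventStep_iterate_add_of_root (hroot : m ^ 2 + z * m + 1 = 0) {u : ℂ} (k : ℕ)
    (hden : ∀ j ≤ k, 1 - m * (∑ i ∈ range j, (m ^ 2) ^ i) * u ≠ 0) :
    (resolventStep z)^[k] (m + u) =
      m + (m ^ 2) ^ k * u / (1 - m * (∑ i ∈ range k, (m ^ 2) ^ i) * u) := by
  induction k with
  | zero => simp
  | succ k ih =>
    rw [Function.iterate_succ_apply', ih fun j hj => hden j (hj.trans k.le_succ), sum_range_succ]
    set S := ∑ i ∈ range k, (m ^ 2) ^ i
    set D := 1 - m * S * u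
    have hD : D ≠ 0 := hden k k.le_succ
    have hsucc : 1 - m * (S + (m ^ 2) ^ k) * u = D - m * (m ^ 2) ^ k * u := by ring
    have hD' : D - m * (m ^ 2) ^ k * u ≠ 0 := by
      rw [← hsucc]
      simpa only [sum_range_succ] using hden (k + 1) le_rfl
    have hw : 1 - m * ((m ^ 2) ^ k * u / D) = (D - m * (m ^ 2) ^ k * u) / D := by
      field_simp
    rw [resolventStep_add_of_root hroot (hw ▸ div_ne_zero hD' hD), hw, hsucc]
    field_simp
    ring

theorem norm_mul_geom_sum_sq_mul_le (hm : ‖m‖ ≤ 1) (k : ℕ) (u : ℂ) :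
    ‖m * (∑ i ∈ range k, (m ^ 2) ^ i) * u‖ ≤ k * ‖u‖ := by
  have hS : ‖∑ i ∈ range k, (m ^ 2) ^ i‖ ≤ k :=
    calc ‖∑ i ∈ range k, (m ^ 2) ^ i‖ ≤ ∑ i ∈ range k, ‖(m ^ 2) ^ i‖ := norm_sum_le _ _
      _ ≤ ∑ i ∈ range k, 1 := sum_le_sum fun i _ => by
        rw [norm_pow, norm_pow]
        exact pow_le_one₀ (by positivity) (pow_le_one₀ (norm_nonneg m) hm)
      _ = k := by simp
  rw [norm_mul, norm_mul]
  gcongr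
  simpa using mul_le_mul hm hS (norm_nonneg _) zero_le_one

theorem norm_resolventStep_iterate_sub_le (hroot : m ^ 2 + z * m + 1 = 0) (hm : ‖m‖ ≤ 1)
    {n : ℕ} {u : ℂ} (hu : n * ‖u‖ ≤ 1 / 2) :
    ‖(resolventStep z)^[n] (m + u) - m - (m ^ 2) ^ n * u -
        (m ^ 2) ^ n * (m * ∑ i ∈ range n, (m ^ 2) ^ i) * u ^ 2‖ ≤ 2 * n ^ 2 * ‖u‖ ^ 3 := by
  have hsmall : ∀ j ≤ n, ‖m * (∑ i ∈ range j, (m ^ 2) ^ i) * u‖ ≤ 1 / 2 := fun j hj =>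
    (norm_mul_geom_sum_sq_mul_le hm j u).trans <| le_trans (by gcongr) hu
  have hden : ∀ j ≤ n, 1 - m * (∑ i ∈ range j, (m ^ 2) ^ i) * u ≠ 0 := fun j hj h => by
    have := hsmall j hj
    rw [← sub_eq_zero.mp h, norm_one] at this
    norm_num at this
  rw [resolventStep_iterate_add_of_root hroot n hden]
  set t := m * (∑ i ∈ range n, (m ^ 2) ^ i) * u
  have ht : 1 / 2 ≤ ‖1 - t‖ := by
    have := norm_sub_norm_le (1 : ℂ) t
    rw [norm_one] at this
    linarith [hsmall n le_rfl]
  have hD : 1 - t ≠ 0 := hden n le_rfl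
  have hpow : ‖(m ^ 2) ^ n‖ ≤ 1 := by
    rw [norm_pow, norm_pow]
    exact pow_le_one₀ (by positivity) (pow_le_one₀ (norm_nonneg m) hm)
  have herr : m + (m ^ 2) ^ n * u / (1 - t) - m - (m ^ 2) ^ n * u -
      (m ^ 2) ^ n * (m * ∑ i ∈ range n, (m ^ 2) ^ i) * u ^ 2 = (m ^ 2) ^ n * u * t ^ 2 / (1 - t) := by
    field_simp
    ring
  rw [herr, norm_div, norm_mul, norm_mul, norm_pow t]
  calc ‖(m ^ 2) ^ n‖ * ‖u‖ * ‖t‖ ^ 2 / ‖1 - t‖ ≤ 1 * ‖u‖ * (n * ‖u‖) ^ 2 / (1 / 2) := by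
        gcongr
        exact norm_mul_geom_sum_sq_mul_le hm n u
    _ = 2 * n ^ 2 * ‖u‖ ^ 3 := by ring

theorem kestenMcKay_mul_coeff_eq (hroot : m ^ 2 + z * m + 1 = 0) (hm : ‖m‖ < 1) {d : ℕ}
    (hd : 2 ≤ d) (n : ℕ) :
    (-z - ((d : ℂ) / ((d : ℂ) - 1)) * m)⁻¹ *
        ((1 - (m ^ 2) ^ n) / ((d : ℂ) - 1) +
          (((d : ℂ) - 2) / ((d : ℂ) - 1)) * (1 - (m ^ 2) ^ n) / (1 - m ^ 2)) =
      m * ∑ i ∈ range n, (m ^ 2) ^ i := by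
  have hm0 : m ≠ 0 := by rintro rfl; simp at hroot
  have hm2 : ‖m ^ 2‖ < 1 := by rw [norm_pow]; exact pow_lt_one₀ (norm_nonneg _) hm two_ne_zero
  have hm1 : m ^ 2 ≠ 1 := fun h => by simp [h] at hm2
  have h1m : 1 - m ^ 2 ≠ 0 := sub_ne_zero.mpr (Ne.symm hm1)
  have hd1 : (d : ℂ) - 1 ≠ 0 := sub_ne_zero.mpr (by exact_mod_cast (by omega : d ≠ 1))
  have hdm : (d : ℂ) - 1 - m ^ 2 ≠ 0 := fun h => by
    have hd' : (2 : ℝ) ≤ d := by exact_mod_cast hd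
    rw [show m ^ 2 = ((d - 1 : ℝ) : ℂ) by push_cast; linear_combination -h, Complex.norm_real,
      Real.norm_of_nonneg (by linarith)] at hm2
    linarith
  have hmd : -z - ((d : ℂ) / ((d : ℂ) - 1)) * m = ((d : ℂ) - 1 - m ^ 2) / (((d : ℂ) - 1) * m) := by
    field_simp
    linear_combination (1 - (d : ℂ)) * hroot
  rw [hmd, geom_sum_eq hm1, inv_div]
  field_simp
  ring

end FixedPoint

/-- **Quadratic expansion of `Y_ℓ(Δ,z)` around `m_sc(z)`.** Fix `d ≥ 3`. There are constants
`c, C > 0` depending only on `d` such that for all `ℓ ≥ 1`, `z ∈ ℂ` with `Im z > 0` (with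
`m_sc(z)` the unique root of `m² + z m + 1 = 0` with positive imaginary part and
`m_d(z) = 1/(-z - (d/(d-1)) m_sc(z))`), and all `Δ` with `Im Δ > 0` and
`ℓ² |Δ - m_sc(z)| ≤ c`, the quantity `Y_ℓ(Δ,z) := ((H_{𝒴_ℓ} - z·I - Δ·𝕀∂)⁻¹)_{oo}`
satisfies the expansion of Proposition `recurbound` with error `≤ C ℓ⁵ |Δ - m_sc(z)|³`. -/
theorem Y_expansion (d : ℕ) (hd : 3 ≤ d) :
    ∃ c C : ℝ, 0 < c ∧ 0 < C ∧
      ∀ (ℓ : ℕ), 1 ≤ ℓ →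
      ∀ (z msc Δ : ℂ), 0 < z.im → msc ^ 2 + z * msc + 1 = 0 → 0 < msc.im → 0 < Δ.im →
        (ℓ : ℝ) ^ 2 * ‖Δ - msc‖ ≤ c →
        ‖
            (((HmatY d ℓ - z • 1 - Δ • IbdY d ℓ)⁻¹) (rootY (d - 1) ℓ) (rootY (d - 1) ℓ)
              - msc
              - msc ^ (2 * ℓ + 2) * (Δ - msc)
              - msc ^ (2 * ℓ + 2) * (-z - ((d : ℂ) / ((d : ℂ) - 1)) * msc)⁻¹ *
                  ((1 - msc ^ (2 * ℓ + 2)) / ((d : ℂ) - 1) +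
                    (((d : ℂ) - 2) / ((d : ℂ) - 1)) * (1 - msc ^ (2 * ℓ + 2)) /
                      (1 - msc ^ 2)) *
                  (Δ - msc) ^ 2)‖ ≤
          C * (ℓ : ℝ) ^ 5 * ‖Δ - msc‖ ^ 3 := by
  refine ⟨1 / 4, 8, by norm_num, by norm_num, fun ℓ hℓ z msc Δ hz hroot hmsc hΔ hsmall => ?_⟩
  rw [inv_HmatY_sub_apply_rootY (by omega) hℓ hz hΔ.le]
  obtain ⟨u, rfl⟩ : ∃ u, Δ = msc + u := ⟨Δ - msc, by ring⟩
  rw [add_sub_cancel_left] at hsmall ⊢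
  have hm : ‖msc‖ < 1 := norm_lt_one_of_sq_add_mul_add_one_eq_zero hz hmsc hroot
  have hcoef := kestenMcKay_mul_coeff_eq hroot hm (by omega : 2 ≤ d) (ℓ + 1)
  have hℓ' : (1 : ℝ) ≤ ℓ := by exact_mod_cast hℓ
  have hℓ2 : (ℓ : ℝ) + 1 ≤ 2 * ℓ ^ 2 := by nlinarith
  have hu : ((ℓ + 1 : ℕ) : ℝ) * ‖u‖ ≤ 1 / 2 := by
    push_cast
    nlinarith [mul_le_mul_of_nonneg_right hℓ2 (norm_nonneg u)]
  rw [show msc ^ (2 * ℓ + 2) = (msc ^ 2) ^ (ℓ + 1) by ring, mul_assoc ((msc ^ 2) ^ (ℓ + 1)) _⁻¹,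
    hcoef]
  calc _ ≤ 2 * ((ℓ + 1 : ℕ) : ℝ) ^ 2 * ‖u‖ ^ 3 := norm_resolventStep_iterate_sub_le hroot hm.le hu
    _ ≤ 8 * (ℓ : ℝ) ^ 5 * ‖u‖ ^ 3 := by
      gcongr ?_ * _
      push_cast
      nlinarith [pow_le_pow_right₀ hℓ' (by norm_num : 2 ≤ 5)]
end
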